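/- arXiv:math/0409561 — 5 statements merged into one kernel-verified Lean document; each statement's English description precedes it below -/
import Mathlib

section
/- Suppose w ∈ W and w(R₁) = R₁. Then (ρ′, Σ_{α ∈ Q(w)} α) ≥ 0, with equality if and only if w(B₁) = B₁. -/
open scoped Classical RealInnerProductSpace

/-!
Put `σ = ∑ R⁺` and `σ₁ = ∑ R₁⁺ = 2ρ'`. If an injective additive map `u` sends a set `P` with
`P ∩ -P = ∅` into `P ∪ -P`, then `α ↦ ±u α`, the sign chosen to land in `P`, permutes `P`; hence
`u (∑ P) = ∑ P - 2 ∑_{α ∈ P, -uα ∈ P} (-u α)`. Applying this to `w` on `R⁺` and on `R₁⁺` and using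
that `w` is an isometry gives `(σ₁, ∑ Q(w)) = ∑_{α ∈ R₁⁺, -wα ∈ R₁⁺} (-w α, σ)`. For a simple root
`b` the reflection `s_b` has `{b}` as its only inversion, whence `(σ, b) = (b, b)`; so `σ` pairs
positively with every positive root, and the sum is `≥ 0`, with equality iff `w (R₁⁺) ⊆ R₁⁺`.
That is equivalent to `w (B₁) = B₁`: a simple root is not a nonnegative combination of positive
roots other than itself, and conversely a root with a positive coordinate is positive.
-/

open Finset Function Submodule

namespace LinearIndepOn

variable {K V : Type*} [DivisionRing K] [AddCommGroup V] [Module K V] {s : Set V}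

noncomputable def coord (hs : LinearIndepOn K id s) (b : V) : Module.Dual K V :=
  if hb : b ∈ s then (Module.Basis.extend hs).coord ⟨b, hs.subset_extend _ hb⟩ else 0

theorem coord_apply_of_mem (hs : LinearIndepOn K id s) {b x : V} (hb : b ∈ s) (hx : x ∈ s) :
    hs.coord b x = if x = b then 1 else 0 := by
  have hx' := (Module.Basis.extend hs).repr_self ⟨x, hs.subset_extend _ hx⟩
  rw [Module.Basis.extend_apply_self] at hx'
  rw [coord, dif_pos hb, Module.Basis.coord_apply, hx', Finsupp.single_apply]
  simp only [Subtype.ext_iff, eq_comm]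

theorem coord_eq_zero_of_mem_span (hs : LinearIndepOn K id s) {t : Set V} (hts : t ⊆ s)
    {y x : V} (hy : y ∈ s) (hyt : y ∉ t) (hx : x ∈ span K t) : hs.coord y x = 0 := by
  have hle : span K t ≤ LinearMap.ker (hs.coord y) := span_le.2 fun z hz => by
    simp [coord_apply_of_mem hs hy (hts hz), show z ≠ y by rintro rfl; exact hyt hz]
  exact hle hx

theorem coord_sum_smul {B : Finset V} (hB : LinearIndepOn K id (B : Set V)) (c : V → K) {y : V}
    (hy : y ∈ B) : hB.coord y (∑ b ∈ B, c b • b) = c y := by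
  rw [map_sum, sum_eq_single_of_mem y hy fun b hb hby => by
    rw [map_smul, coord_apply_of_mem hB (mem_coe.2 hy) (mem_coe.2 hb), if_neg hby, smul_zero]]
  rw [map_smul, coord_apply_of_mem hB (mem_coe.2 hy) (mem_coe.2 hy), if_pos rfl, smul_eq_mul,
    mul_one]

end LinearIndepOn

section PositiveSystem

variable {V : Type*} [AddCommGroup V] [Module ℝ V]

def IsReducedRootSet (R : Finset V) : Prop :=
  ∀ α ∈ R, ∀ t : ℝ, t • α ∈ R → t = 1 ∨ t = -1

structure IsBase (R Rpos B : Finset V) : Prop where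
  subset_roots : Rpos ⊆ R
  split : ∀ α ∈ R, (α ∈ Rpos ∨ -α ∈ Rpos) ∧ ¬(α ∈ Rpos ∧ -α ∈ Rpos)
  base_subset : B ⊆ Rpos
  indep : LinearIndepOn ℝ id (B : Set V)
  exists_nat_coeff : ∀ α ∈ Rpos, ∃ c : V → ℕ, α = ∑ b ∈ B, (c b : ℝ) • b

namespace IsBase

variable {R Rpos B : Finset V} {α β b y : V}

theorem neg_notMem (h : IsBase R Rpos B) (hα : α ∈ Rpos) : -α ∉ Rpos :=
  fun hneg => (h.split α (h.subset_roots hα)).2 ⟨hα, hneg⟩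

theorem ne_zero (h : IsBase R Rpos B) (hα : α ∈ Rpos) : α ≠ 0 := by
  rintro rfl
  exact h.neg_notMem hα (by rwa [neg_zero])

theorem coord_nonneg (h : IsBase R Rpos B) (hα : α ∈ Rpos) (hy : y ∈ B) :
    0 ≤ h.indep.coord y α := by
  obtain ⟨c, rfl⟩ := h.exists_nat_coeff α hα
  rw [h.indep.coord_sum_smul _ hy]
  positivity

theorem sum_coord_smul (h : IsBase R Rpos B) (hα : α ∈ Rpos) :
    ∑ y ∈ B, h.indep.coord y α • y = α := by
  obtain ⟨c, rfl⟩ := h.exists_nat_coeff α hα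
  exact sum_congr rfl fun y hy => by rw [h.indep.coord_sum_smul _ hy]

theorem exists_coord_pos (h : IsBase R Rpos B) (hα : α ∈ Rpos) :
    ∃ y ∈ B, 0 < h.indep.coord y α := by
  by_contra! hall
  refine h.ne_zero hα ?_
  rw [← h.sum_coord_smul hα]
  exact sum_eq_zero fun y hy => by
    rw [le_antisymm (hall y hy) (h.coord_nonneg hα hy), zero_smul]

theorem mem_pos_of_coord_pos (h : IsBase R Rpos B) (hα : α ∈ R) (hy : y ∈ B)
    (hpos : 0 < h.indep.coord y α) : α ∈ Rpos := by
  refine (h.split α hα).1.resolve_right fun hneg => ?_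
  have := h.coord_nonneg hneg hy
  rw [map_neg] at this
  linarith

theorem coord_eq_zero_of_mem_span (h : IsBase R Rpos B) {B₁ : Finset V} (hB₁ : B₁ ⊆ B)
    (hy : y ∈ B) (hyB₁ : y ∉ B₁) (hα : α ∈ span ℝ (B₁ : Set V)) : h.indep.coord y α = 0 :=
  h.indep.coord_eq_zero_of_mem_span (coe_subset.2 hB₁) hy hyB₁ hα

theorem sum_coord_smul_of_mem_span (h : IsBase R Rpos B) {B₁ : Finset V} (hB₁ : B₁ ⊆ B)
    (hα : α ∈ Rpos) (hαB₁ : α ∈ span ℝ (B₁ : Set V)) :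
    ∑ y ∈ B₁, h.indep.coord y α • y = α := by
  conv_rhs => rw [← h.sum_coord_smul hα]
  exact sum_subset hB₁ fun y hy hyB₁ => by
    rw [h.coord_eq_zero_of_mem_span hB₁ hy hyB₁ hαB₁, zero_smul]

theorem eq_of_coord_eq_zero (hRred : IsReducedRootSet R) (h : IsBase R Rpos B) (hβ : β ∈ Rpos)
    (hb : b ∈ B) (hcoord : ∀ y ∈ B, y ≠ b → h.indep.coord y β = 0) : β = b := by
  have hβb : h.indep.coord b β • b = β := by
    conv_rhs => rw [← h.sum_coord_smul hβ]
    rw [sum_eq_single_of_mem b hb fun y hy hyb => by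
      rw [hcoord y hy hyb, zero_smul]]
  rcases hRred b (h.subset_roots (h.base_subset hb)) _ (hβb ▸ h.subset_roots hβ) with
    hone | hminus_one
  · rw [← hβb, hone, one_smul]
  · linarith [h.coord_nonneg hβ hb]

theorem sub_smul_mem_pos (hRred : IsReducedRootSet R) (h : IsBase R Rpos B) (hα : α ∈ Rpos)
    (hb : b ∈ B) (hαb : α ≠ b) {m : ℝ} (hR : α - m • b ∈ R) : α - m • b ∈ Rpos := by
  obtain ⟨y, hy, hyb, hy0⟩ : ∃ y ∈ B, y ≠ b ∧ h.indep.coord y α ≠ 0 := by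
    by_contra! hall
    exact hαb (h.eq_of_coord_eq_zero hRred hα hb hall)
  refine h.mem_pos_of_coord_pos hR hy ?_
  rw [map_sub, map_smul, h.indep.coord_apply_of_mem hy hb, if_neg hyb.symm, smul_zero, sub_zero]
  exact (h.coord_nonneg hα hy).lt_of_ne' hy0

theorem exists_eq_of_eq_sum_smul (hRred : IsReducedRootSet R) (h : IsBase R Rpos B) {ι : Type*}
    {t : Finset ι} {c : ι → ℝ} {γ : ι → V} (hc : ∀ i ∈ t, 0 ≤ c i) (hγ : ∀ i ∈ t, γ i ∈ Rpos)
    (hb : b ∈ B) (hsum : b = ∑ i ∈ t, c i • γ i) : ∃ i ∈ t, γ i = b := by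
  have hcoord : ∀ y ∈ B, h.indep.coord y b = ∑ i ∈ t, c i * h.indep.coord y (γ i) := by
    intro y _
    conv_lhs => rw [hsum]
    simp only [map_sum, map_smul, smul_eq_mul]
  have hterm : ∀ y ∈ B, ∀ i ∈ t, 0 ≤ c i * h.indep.coord y (γ i) :=
    fun y hy i hi => mul_nonneg (hc i hi) (h.coord_nonneg (hγ i hi) hy)
  obtain ⟨i, hi, hpos⟩ : ∃ i ∈ t, 0 < c i * h.indep.coord b (γ i) := by
    by_contra! hall
    have := (hcoord b hb).trans_le (sum_nonpos hall)
    rw [h.indep.coord_apply_of_mem hb hb, if_pos rfl] at this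
    linarith
  have hci : 0 < c i := pos_of_mul_pos_left hpos (h.coord_nonneg (hγ i hi) hb)
  refine ⟨i, hi, h.eq_of_coord_eq_zero hRred (hγ i hi) hb fun y hy hyb => ?_⟩
  have hzero : ∑ j ∈ t, c j * h.indep.coord y (γ j) = 0 := by
    rw [← hcoord y hy, h.indep.coord_apply_of_mem hy hb, if_neg hyb.symm]
  have := (sum_eq_zero_iff_of_nonneg (hterm y hy)).1 hzero i hi
  exact (mul_eq_zero.1 this).resolve_left hci.ne'

variable {B₁ P : Finset V} {F : Type*} [EquivLike F V V] [LinearEquivClass F ℝ V V]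

theorem image_eq_of_mapsTo (hRred : IsReducedRootSet R) (h : IsBase R Rpos B) (hB₁ : B₁ ⊆ B)
    (hP : ∀ α, α ∈ P ↔ α ∈ Rpos ∧ α ∈ span ℝ (B₁ : Set V)) (g : F)
    (hg : Set.MapsTo g P P) : B₁.image g = B₁ := by
  have hB₁P : ∀ b ∈ B₁, b ∈ P := fun b hb => (hP b).2 ⟨h.base_subset (hB₁ hb), subset_span hb⟩
  refine (eq_of_subset_of_card_le (fun b hb => ?_) card_image_le).symm
  obtain ⟨α, hαP, hαb⟩ := surjOn_of_injOn_of_card_le g hg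
    (EquivLike.injective g).injOn le_rfl (hB₁P b hb)
  obtain ⟨hα, hαB₁⟩ := (hP α).1 hαP
  have hsum : b = ∑ y ∈ B₁, h.indep.coord y α • g y := by
    rw [← hαb]
    conv_lhs => rw [← h.sum_coord_smul_of_mem_span hB₁ hα hαB₁]
    simp only [map_sum, map_smul]
  obtain ⟨y, hy, hyb⟩ := h.exists_eq_of_eq_sum_smul hRred
    (fun y hy => h.coord_nonneg hα (hB₁ hy)) (fun y hy => ((hP _).1 (hg (hB₁P y hy))).1)
    (hB₁ hb) hsum
  exact mem_image.2 ⟨y, hy, hyb⟩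

theorem mapsTo_of_image_eq (h : IsBase R Rpos B) (hB₁ : B₁ ⊆ B)
    (hP : ∀ α, α ∈ P ↔ α ∈ Rpos ∧ α ∈ span ℝ (B₁ : Set V)) (g : F) (hgR : Set.MapsTo g P R)
    (himage : B₁.image g = B₁) : Set.MapsTo g P P := by
  have hgB₁ : ∀ y ∈ B₁, g y ∈ B₁ := fun y hy => himage ▸ mem_image_of_mem g hy
  intro α hαP
  obtain ⟨hα, hαB₁⟩ := (hP α).1 hαP
  have hgα : g α = ∑ y ∈ B₁, h.indep.coord y α • g y := by
    conv_lhs => rw [← h.sum_coord_smul_of_mem_span hB₁ hα hαB₁]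
    simp only [map_sum, map_smul]
  obtain ⟨x, hxB, hx⟩ := h.exists_coord_pos hα
  have hx₁ : x ∈ B₁ := by
    by_contra hx₁
    rw [h.coord_eq_zero_of_mem_span hB₁ hxB hx₁ hαB₁] at hx
    exact hx.false
  have hcoord : h.indep.coord (g x) (g α) = h.indep.coord x α := by
    rw [hgα, map_sum, sum_eq_single_of_mem x hx₁ fun y hy hyx => by
      rw [map_smul, h.indep.coord_apply_of_mem (hB₁ (hgB₁ x hx₁)) (hB₁ (hgB₁ y hy)),
        if_neg ((EquivLike.injective g).ne hyx), smul_zero]]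
    rw [map_smul, h.indep.coord_apply_of_mem (hB₁ (hgB₁ x hx₁)) (hB₁ (hgB₁ x hx₁)), if_pos rfl,
      smul_eq_mul, mul_one]
  refine (hP _).2 ⟨h.mem_pos_of_coord_pos (hgR hαP) (hB₁ (hgB₁ x hx₁)) (hcoord ▸ hx), ?_⟩
  rw [hgα]
  exact sum_mem fun y hy => smul_mem _ _ (subset_span (hgB₁ y hy))

end IsBase

end PositiveSystem

theorem sum_map_eq_sum_add_two_nsmul {V F : Type*} [AddCommGroup V] [FunLike F V V]
    [AddMonoidHomClass F V V] (f : F) (hf : Injective f) {P : Finset V}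
    (hP : ∀ α ∈ P, -α ∉ P) (hfP : ∀ α ∈ P, f α ∈ P ∨ -f α ∈ P) :
    ∑ α ∈ P, f α = ∑ α ∈ P, α + 2 • ∑ α ∈ P with -f α ∈ P, f α := by
  set g : V → V := fun α => if -f α ∈ P then -f α else f α
  have hgP : ∀ α ∈ P, g α ∈ P := fun α hα => by
    by_cases hneg : -f α ∈ P
    · simpa only [g, if_pos hneg] using hneg
    · simpa only [g, if_neg hneg] using (hfP α hα).resolve_right hneg
  have hinj : Set.InjOn g P := by
    intro a ha b hb hab
    simp only [g] at hab
    split_ifs at hab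
    · exact hf (neg_injective hab)
    · have hab : -a = b := hf (by rw [map_neg, hab])
      exact absurd (hab ▸ hb) (hP a ha)
    · have hab : a = -b := hf (by rw [map_neg, hab])
      exact absurd (hab ▸ ha) (hP b hb)
    · exact hf hab
  have hperm : ∑ α ∈ P, g α = ∑ α ∈ P, α :=
    sum_nbij g hgP hinj (surjOn_of_injOn_of_card_le g hgP hinj le_rfl)
      fun _ _ => rfl
  rw [sum_ite, sum_neg_distrib] at hperm
  rw [← sum_filter_add_sum_filter_not P (fun α => -f α ∈ P), ← hperm, two_nsmul]
  abel

section InnerProductSpace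

variable {V : Type*} [NormedAddCommGroup V] [InnerProductSpace ℝ V]

theorem inner_sum_sum_filter_neg_map_mem (w : V ≃ₗᵢ[ℝ] V) {P X : Finset V}
    (hP : ∀ α ∈ P, -α ∉ P) (hwP : ∀ α ∈ P, w α ∈ P ∨ -w α ∈ P)
    (hX : ∀ α ∈ X, -α ∉ X) (hwX : ∀ α ∈ X, w α ∈ X ∨ -w α ∈ X) :
    ⟪∑ α ∈ P, α, ∑ α ∈ X with -w α ∈ X, α⟫ = ∑ α ∈ P with -w α ∈ P, ⟪-w α, ∑ β ∈ X, β⟫ := by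
  set a := ∑ α ∈ P, α
  set x := ∑ α ∈ X, α
  set q := ∑ α ∈ X with -w α ∈ X, α
  set t := ∑ α ∈ P with -w α ∈ P, w α
  have hwx : w x = x + 2 • w q := by
    simp only [x, q, map_sum]
    exact sum_map_eq_sum_add_two_nsmul w w.injective hX hwX
  have hwa : w a = a + 2 • t := by
    simp only [a, t, map_sum]
    exact sum_map_eq_sum_add_two_nsmul w w.injective hP hwP
  have hisometry : ⟪w a, x⟫ + 2 * ⟪a, q⟫ = ⟪a, x⟫ := by
    rw [← w.inner_map_map a q, two_mul, ← inner_add_right, ← inner_add_right, ← two_nsmul, ← hwx,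
      w.inner_map_map]
  have hwa_inner : ⟪w a, x⟫ = ⟪a, x⟫ + 2 * ⟪t, x⟫ := by
    rw [hwa, two_nsmul, inner_add_left, inner_add_left, two_mul]
  have hsum : ∑ α ∈ P with -w α ∈ P, ⟪-w α, x⟫ = -⟪t, x⟫ := by
    simp only [t, inner_neg_left, sum_neg_distrib, sum_inner]
  rw [hsum]
  linarith

namespace IsBase

variable {R Rpos B : Finset V} {b β : V}

theorem inner_sum_pos_eq_inner_self (hRred : IsReducedRootSet R) (h : IsBase R Rpos B)
    (hb : b ∈ B) (r : V ≃ₗᵢ[ℝ] V) (hr : ∀ x, r x = x - (2 * ⟪x, b⟫ / ⟪b, b⟫) • b)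
    (hrR : Set.MapsTo r Rpos R) :
    ⟪∑ α ∈ Rpos, α, b⟫ = ⟪b, b⟫ := by
  have hbpos := h.base_subset hb
  have hbb : ⟪b, b⟫ ≠ 0 := inner_self_ne_zero.2 (h.ne_zero hbpos)
  have hrb : r b = -b := by
    rw [hr, mul_div_assoc, div_self hbb, mul_one, two_smul, sub_add_cancel_left]
  have hinversions : {α ∈ Rpos | -r α ∈ Rpos} = {b} := by
    ext α
    simp only [mem_filter, mem_singleton]
    refine ⟨fun ⟨hα, hneg⟩ => by_contra fun hαb => h.neg_notMem ?_ hneg, ?_⟩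
    · have hrα := hrR hα
      rw [hr] at hrα ⊢
      exact h.sub_smul_mem_pos hRred hα hb hαb hrα
    · rintro rfl
      rw [hrb, neg_neg]
      exact ⟨hbpos, hbpos⟩
  have hsum := sum_map_eq_sum_add_two_nsmul r r.injective (fun α hα => h.neg_notMem hα)
    fun α hα => (h.split _ (hrR hα)).1
  rw [hinversions, sum_singleton, hrb, ← map_sum, hr, sub_eq_add_neg, add_right_inj,
    smul_neg, neg_inj, ← Nat.cast_smul_eq_nsmul ℝ] at hsum
  have := smul_left_injective ℝ (h.ne_zero hbpos) hsum
  field_simp at this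
  push_cast at this
  linarith

theorem inner_sum_pos_pos (hRred : IsReducedRootSet R) (h : IsBase R Rpos B) (s : V → V ≃ₗᵢ[ℝ] V)
    (hs : ∀ b ∈ B, ∀ x, s b x = x - (2 * ⟪x, b⟫ / ⟪b, b⟫) • b)
    (hsR : ∀ b ∈ B, Set.MapsTo (s b) Rpos R) (hβ : β ∈ Rpos) : 0 < ⟪β, ∑ α ∈ Rpos, α⟫ := by
  have hterm : ∀ y ∈ B, ⟪h.indep.coord y β • y, ∑ α ∈ Rpos, α⟫ = h.indep.coord y β * ⟪y, y⟫ :=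
    fun y hy => by
      rw [real_inner_smul_left, real_inner_comm,
        h.inner_sum_pos_eq_inner_self hRred hy (s y) (hs y hy) (hsR y hy)]
  obtain ⟨y, hy, hypos⟩ := h.exists_coord_pos hβ
  rw [← h.sum_coord_smul hβ, sum_inner]
  refine sum_pos' (fun z hz => ?_) ⟨y, hy, ?_⟩ <;> rw [hterm _ ‹_›]
  · exact mul_nonneg (h.coord_nonneg hβ hz) real_inner_self_nonneg
  · exact mul_pos hypos (real_inner_self_pos.2 (h.ne_zero (h.base_subset hy)))

theorem inner_sum_inversions_nonneg_and_eq_zero_iff (hRred : IsReducedRootSet R)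
    (h : IsBase R Rpos B) (s : V → V ≃ₗᵢ[ℝ] V)
    (hs : ∀ b ∈ B, ∀ x, s b x = x - (2 * ⟪x, b⟫ / ⟪b, b⟫) • b)
    (hsR : ∀ b ∈ B, Set.MapsTo (s b) Rpos R) {B₁ P : Finset V} (hB₁ : B₁ ⊆ B)
    (hP : ∀ α, α ∈ P ↔ α ∈ Rpos ∧ α ∈ span ℝ (B₁ : Set V)) (w : V ≃ₗᵢ[ℝ] V)
    (hwR : Set.MapsTo w R R) (hwB₁ : ∀ α ∈ P, w α ∈ span ℝ (B₁ : Set V)) :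
    0 ≤ ⟪∑ α ∈ P, α, ∑ α ∈ Rpos with -w α ∈ Rpos, α⟫ ∧
      (⟪∑ α ∈ P, α, ∑ α ∈ Rpos with -w α ∈ Rpos, α⟫ = 0 ↔ B₁.image w = B₁) := by
  have hPneg : ∀ α ∈ P, -α ∉ P :=
    fun α hα hneg => h.neg_notMem ((hP α).1 hα).1 ((hP _).1 hneg).1
  have hwP : ∀ α ∈ P, w α ∈ P ∨ -w α ∈ P := fun α hα =>
    (h.split _ (hwR (h.subset_roots ((hP α).1 hα).1))).1.imp
      (fun hpos => (hP _).2 ⟨hpos, hwB₁ α hα⟩) fun hneg => (hP _).2 ⟨hneg, neg_mem (hwB₁ α hα)⟩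
  rw [inner_sum_sum_filter_neg_map_mem w hPneg hwP (fun α hα => h.neg_notMem hα)
    fun α hα => (h.split _ (hwR (h.subset_roots hα))).1]
  have hterm : ∀ α ∈ {α ∈ P | -w α ∈ P}, 0 < ⟪-w α, ∑ β ∈ Rpos, β⟫ :=
    fun α hα => h.inner_sum_pos_pos hRred s hs hsR ((hP _).1 (mem_filter.1 hα).2).1
  have hmaps : {α ∈ P | -w α ∈ P} = ∅ ↔ Set.MapsTo w P P := by
    rw [filter_eq_empty_iff]
    exact forall₂_congr fun α hα => ⟨(hwP α hα).resolve_right, fun hwα => hPneg _ hwα⟩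
  have himage := hmaps.trans ⟨h.image_eq_of_mapsTo hRred hB₁ hP w,
    h.mapsTo_of_image_eq hB₁ hP w fun α hα => hwR (h.subset_roots ((hP α).1 hα).1)⟩
  refine ⟨sum_nonneg fun α hα => (hterm α hα).le, ?_⟩
  rw [← himage]
  exact ⟨fun hzero => not_nonempty_iff_eq_empty.1 fun hne => (sum_pos hterm hne).ne' hzero,
    fun hempty => by rw [hempty, sum_empty]⟩

end IsBase

theorem mapsTo_of_mem_closure {R : Finset V} {S : Set (V ≃ₗᵢ[ℝ] V)}
    (hS : ∀ g ∈ S, Set.MapsTo g R R) {g : V ≃ₗᵢ[ℝ] V} (hg : g ∈ Subgroup.closure S) :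
    Set.MapsTo g R R := by
  induction hg using Subgroup.closure_induction with
  | mem g hg => exact hS g hg
  | one => exact fun α hα => hα
  | mul g g' _ _ hgR hg'R => exact fun α hα => hgR (hg'R hα)
  | inv g _ hgR =>
    intro α hα
    obtain ⟨β, hβ, rfl⟩ := surjOn_of_injOn_of_card_le g hgR g.injective.injOn le_rfl hα
    simpa [LinearIsometryEquiv.inv_def] using hβ

end InnerProductSpace

theorem stmt_1_general
    {V : Type*} [NormedAddCommGroup V] [InnerProductSpace ℝ V]
    (R : Finset V)
    (hRred : ∀ α ∈ R, ∀ t : ℝ, t • α ∈ R → t = 1 ∨ t = -1)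
    (s : V → (V ≃ₗᵢ[ℝ] V))
    (hs : ∀ α ∈ R, ∀ x : V, s α x = x - (2 * ⟪x, α⟫ / ⟪α, α⟫) • α)
    (hRs : ∀ α ∈ R, ∀ β ∈ R, s α β ∈ R)
    (W : Subgroup (V ≃ₗᵢ[ℝ] V))
    (hW : W = Subgroup.closure {g | ∃ α ∈ R, g = s α})
    (Rpos : Finset V) (hRposSub : Rpos ⊆ R)
    (hRsplit : ∀ α ∈ R, (α ∈ Rpos ∨ -α ∈ Rpos) ∧ ¬(α ∈ Rpos ∧ -α ∈ Rpos))
    (B : Finset V) (hBsub : B ⊆ Rpos)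
    (hBindep : LinearIndependent ℝ (Subtype.val : {x : V // x ∈ B} → V))
    (hBgen : ∀ α ∈ Rpos, ∃ c : V → ℕ, α = ∑ b ∈ B, (c b : ℝ) • b)
    (B1 : Finset V) (hB1B : B1 ⊆ B)
    (R1 : Finset V)
    (hR1 : ∀ α, α ∈ R1 ↔ α ∈ R ∧ (α : V) ∈ Submodule.span ℝ (B1 : Set V))
    (w : V ≃ₗᵢ[ℝ] V) (hwW : w ∈ W)
    (hwR1 : Finset.image (fun α => w α) R1 = R1) :
    0 ≤ ⟪(2⁻¹ : ℝ) • ∑ α ∈ R1 ∩ Rpos, α, ∑ α ∈ Rpos.filter (fun α => -(w α) ∈ Rpos), α⟫ ∧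
      (⟪(2⁻¹ : ℝ) • ∑ α ∈ R1 ∩ Rpos, α, ∑ α ∈ Rpos.filter (fun α => -(w α) ∈ Rpos), α⟫ = 0 ↔
        Finset.image (fun α => w α) B1 = B1) := by
  have h : IsBase R Rpos B := ⟨hRposSub, hRsplit, hBsub, hBindep, hBgen⟩
  have hP : ∀ α, α ∈ R1 ∩ Rpos ↔ α ∈ Rpos ∧ α ∈ span ℝ (B1 : Set V) := fun α => by
    rw [mem_inter, hR1]
    exact ⟨fun ⟨⟨_, hα⟩, hpos⟩ => ⟨hpos, hα⟩, fun ⟨hpos, hα⟩ => ⟨⟨hRposSub hpos, hα⟩, hpos⟩⟩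
  have hwR : Set.MapsTo w R R :=
    mapsTo_of_mem_closure (by rintro _ ⟨β, hβ, rfl⟩; exact hRs β hβ) (hW ▸ hwW)
  have hwB1 : ∀ α ∈ R1 ∩ Rpos, w α ∈ span ℝ (B1 : Set V) :=
    fun α hα => ((hR1 _).1 (hwR1 ▸ mem_image_of_mem _ (mem_inter.1 hα).1)).2
  rw [real_inner_smul_left, mul_nonneg_iff_of_pos_left (by norm_num), mul_eq_zero,
    or_iff_right (by norm_num)]
  exact h.inner_sum_inversions_nonneg_and_eq_zero_iff hRred s
    (fun b hb => hs b (hRposSub (hBsub hb)))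
    (fun b hb α hα => hRs b (hRposSub (hBsub hb)) α (hRposSub hα))
    hB1B hP w hwR hwB1

/-- Context: `R` is a finite crystallographic root system in a real inner product
space `V`, with Weyl group `W` (generated by the reflections `s α`), positive
system `Rpos`, simple roots `B`; `B1 ⊆ B` and `R1` is the subroot system with
simple roots `B1`, with positive roots `R1 ∩ Rpos` and Weyl group `W1`. -/
theorem stmt_1
    {V : Type*} [NormedAddCommGroup V] [InnerProductSpace ℝ V]
    (R : Finset V)
    (hR0 : ∀ α ∈ R, α ≠ 0)
    (hRcrys : ∀ α ∈ R, ∀ β ∈ R, ∃ n : ℤ, 2 * ⟪β, α⟫ / ⟪α, α⟫ = (n : ℝ))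
    (hRred : ∀ α ∈ R, ∀ t : ℝ, t • α ∈ R → t = 1 ∨ t = -1)
    (s : V → (V ≃ₗᵢ[ℝ] V))
    (hs : ∀ α ∈ R, ∀ x : V, s α x = x - (2 * ⟪x, α⟫ / ⟪α, α⟫) • α)
    (hRs : ∀ α ∈ R, ∀ β ∈ R, s α β ∈ R)
    (W : Subgroup (V ≃ₗᵢ[ℝ] V))
    (hW : W = Subgroup.closure {g | ∃ α ∈ R, g = s α})
    (Rpos : Finset V) (hRposSub : Rpos ⊆ R)
    (hRsplit : ∀ α ∈ R, (α ∈ Rpos ∨ -α ∈ Rpos) ∧ ¬(α ∈ Rpos ∧ -α ∈ Rpos))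
    (B : Finset V) (hBsub : B ⊆ Rpos)
    (hBindep : LinearIndependent ℝ (Subtype.val : {x : V // x ∈ B} → V))
    (hBgen : ∀ α ∈ Rpos, ∃ c : V → ℕ, α = ∑ b ∈ B, (c b : ℝ) • b)
    (B1 : Finset V) (hB1B : B1 ⊆ B)
    (R1 : Finset V)
    (hR1 : ∀ α, α ∈ R1 ↔ α ∈ R ∧ (α : V) ∈ Submodule.span ℝ (B1 : Set V))
    (w : V ≃ₗᵢ[ℝ] V) (hwW : w ∈ W)
    (hwR1 : Finset.image (fun α => w α) R1 = R1) :
    0 ≤ ⟪(2⁻¹ : ℝ) • ∑ α ∈ R1 ∩ Rpos, α, ∑ α ∈ Rpos.filter (fun α => -(w α) ∈ Rpos), α⟫ ∧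
      (⟪(2⁻¹ : ℝ) • ∑ α ∈ R1 ∩ Rpos, α, ∑ α ∈ Rpos.filter (fun α => -(w α) ∈ Rpos), α⟫ = 0 ↔
        Finset.image (fun α => w α) B1 = B1) :=
  stmt_1_general R hRred s hs hRs W hW Rpos hRposSub hRsplit B hBsub hBindep hBgen B1 hB1B R1 hR1 w
    hwW hwR1
end

section
/- For w ∈ W₀ the following are equivalent: (1) w(B₁) = B₁; (2) w(B₁) ⊆ R₁⁺; (3) ℓ(w s_α) > ℓ(w) for all α ∈ B₁ (where s_α is the reflection in α). -/
open scoped Classical RealInnerProductSpace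

/-!
If `w` stabilises `R1` and sends `B1` into `R1⁺`, then it sends every root of `R1⁺`, a
nonnegative integer combination of `B1`, to a nonnegative combination of roots of `R1⁺`; so `w`
maps `R1⁺` into itself without lowering the `B1`-height. Permuting the finite set `R1⁺`, it must
preserve heights, hence sends the height-one roots `B1` into `B1`.

For the length condition: a simple reflection `s_α` permutes `R⁺ \ {α}` and sends `α` to `-α`,
so `ℓ(w s_α) = ℓ(w) ± 1` according as `w α` is positive or negative.
-/

section Inversions

variable {V : Type*} [Neg V]

noncomputable def inversions (Rpos : Finset V) (f : V → V) : Finset V :=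
  Rpos.filter fun β => -f β ∈ Rpos

lemma card_erase_inversions_comp {Rpos : Finset V} {α : V} {r : V → V}
    (hr : Function.Involutive r) (hrpos : ∀ β ∈ Rpos, β ≠ α → r β ∈ Rpos ∧ r β ≠ α)
    (f : V → V) :
    ((inversions Rpos (f ∘ r)).erase α).card = ((inversions Rpos f).erase α).card := by
  refine Finset.card_nbij' r r (fun β hβ => ?_) (fun β hβ => ?_) (fun β _ => hr β)
    (fun β _ => hr β)
  · simp only [Finset.mem_coe, Finset.mem_erase, inversions, Finset.mem_filter,
      Function.comp_apply] at hβ ⊢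
    obtain ⟨hne, hβpos, hfβ⟩ := hβ
    exact ⟨(hrpos β hβpos hne).2, (hrpos β hβpos hne).1, hfβ⟩
  · simp only [Finset.mem_coe, Finset.mem_erase, inversions, Finset.mem_filter,
      Function.comp_apply] at hβ ⊢
    obtain ⟨hne, hβpos, hfβ⟩ := hβ
    exact ⟨(hrpos β hβpos hne).2, (hrpos β hβpos hne).1, by rwa [hr β]⟩

end Inversions

section LinearAlgebra

variable {V : Type*} [AddCommGroup V] [Module ℝ V]

lemma exists_linearMap_eq_on {B : Finset V}
    (hB : LinearIndependent ℝ (Subtype.val : {x : V // x ∈ B} → V)) (f : V → ℝ) :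
    ∃ φ : V →ₗ[ℝ] ℝ, ∀ b ∈ B, φ b = f b := by
  have hBi : LinearIndepOn ℝ id (B : Set V) := hB
  let basis := Module.Basis.extend hBi
  refine ⟨basis.constr ℝ fun i => f i, fun b hb => ?_⟩
  have hb : b ∈ hBi.extend (Set.subset_univ _) := hBi.subset_extend _ hb
  simpa [basis, Module.Basis.extend_apply_self] using basis.constr_basis ℝ (fun i => f i) ⟨b, hb⟩

lemma apply_sum_smul_of_eqOn {B : Finset V} {φ : V →ₗ[ℝ] ℝ} {f : V → ℝ}
    (hφ : ∀ b ∈ B, φ b = f b) (c : V → ℝ) :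
    φ (∑ b ∈ B, c b • b) = ∑ b ∈ B, c b * f b := by
  rw [map_sum]
  exact Finset.sum_congr rfl fun b hb => by rw [map_smul, hφ b hb, smul_eq_mul]

lemma apply_sum_natCast_smul_of_eq_one {s : Finset V} {φ : V →ₗ[ℝ] ℝ} (hφ : ∀ b ∈ s, φ b = 1)
    (c : V → ℕ) : φ (∑ b ∈ s, (c b : ℝ) • b) = ((∑ b ∈ s, c b : ℕ) : ℝ) := by
  rw [apply_sum_smul_of_eqOn hφ]
  push_cast
  simp

lemma mem_of_sum_natCast_smul_of_sum_eq_one {s : Finset V} {c : V → ℕ}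
    (hc : ∑ b ∈ s, c b = 1) : ∑ b ∈ s, (c b : ℝ) • b ∈ s := by
  obtain ⟨b₀, hb₀, hcb₀⟩ := Finset.exists_ne_zero_of_sum_ne_zero (hc ▸ one_ne_zero)
  have hsplit := Finset.add_sum_erase s c hb₀
  have hrest : ∀ b ∈ s, b ≠ b₀ → c b = 0 := fun b hb hne =>
    Finset.sum_eq_zero_iff.mp (by omega) b (Finset.mem_erase.mpr ⟨hne, hb⟩)
  rw [Finset.sum_eq_single_of_mem b₀ hb₀ fun b hb hne => by simp [hrest b hb hne]]
  have : c b₀ = 1 := by omega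
  simpa [this] using hb₀

structure IsSimpleSystem (R Rpos B : Finset V) : Prop where
  ne_zero : ∀ α ∈ R, α ≠ 0
  reduced : ∀ α ∈ R, ∀ t : ℝ, t • α ∈ R → t = 1 ∨ t = -1
  pos_subset : Rpos ⊆ R
  pos_or_neg_pos : ∀ α ∈ R, α ∈ Rpos ∨ -α ∈ Rpos
  not_pos_and_neg_pos : ∀ α ∈ R, ¬(α ∈ Rpos ∧ -α ∈ Rpos)
  simple_subset : B ⊆ Rpos
  linearIndependent : LinearIndependent ℝ (Subtype.val : {x : V // x ∈ B} → V)
  exists_natCast_coeffs : ∀ α ∈ Rpos, ∃ c : V → ℕ, α = ∑ b ∈ B, (c b : ℝ) • b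

namespace IsSimpleSystem

variable {R Rpos B B1 R1 : Finset V}

lemma simple_mem (h : IsSimpleSystem R Rpos B) {α : V} (hα : α ∈ B) : α ∈ R :=
  h.pos_subset (h.simple_subset hα)

lemma apply_nonneg (h : IsSimpleSystem R Rpos B) {φ : V →ₗ[ℝ] ℝ} (hφ : ∀ b ∈ B, 0 ≤ φ b)
    {β : V} (hβ : β ∈ Rpos) : 0 ≤ φ β := by
  obtain ⟨c, rfl⟩ := h.exists_natCast_coeffs β hβ
  rw [apply_sum_smul_of_eqOn (fun b _ => rfl)]
  exact Finset.sum_nonneg fun b hb => mul_nonneg (Nat.cast_nonneg _) (hφ b hb)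

lemma mem_pos_of_apply_pos (h : IsSimpleSystem R Rpos B) {φ : V →ₗ[ℝ] ℝ}
    (hφ : ∀ b ∈ B, 0 ≤ φ b) {β : V} (hβ : β ∈ R) (hpos : 0 < φ β) : β ∈ Rpos := by
  by_contra hneg
  have := h.apply_nonneg hφ ((h.pos_or_neg_pos β hβ).resolve_left hneg)
  rw [map_neg] at this
  linarith

lemma exists_coeff_ne_zero_of_ne (h : IsSimpleSystem R Rpos B) {α β : V} (hα : α ∈ B)
    (hβ : β ∈ R) (hne : β ≠ α) {c : V → ℕ} (hc : β = ∑ b ∈ B, (c b : ℝ) • b) :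
    ∃ b ∈ B, b ≠ α ∧ c b ≠ 0 := by
  by_contra! hzero
  have hβα : β = (c α : ℝ) • α := by
    rw [hc, Finset.sum_eq_single_of_mem α hα fun b hb hbα => by simp [hzero b hb hbα]]
  rcases h.reduced α (h.simple_mem hα) _ (hβα ▸ hβ) with h1 | h1
  · exact hne (by rw [hβα, h1, one_smul])
  · linarith [Nat.cast_nonneg (α := ℝ) (c α)]

lemma subset_inter_pos (h : IsSimpleSystem R Rpos B) (hB1B : B1 ⊆ B)
    (hR1 : ∀ α, α ∈ R1 ↔ α ∈ R ∧ α ∈ Submodule.span ℝ (B1 : Set V)) : B1 ⊆ R1 ∩ Rpos :=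
  fun b hb => Finset.mem_inter.mpr
    ⟨(hR1 b).mpr ⟨h.simple_mem (hB1B hb), Submodule.subset_span hb⟩, h.simple_subset (hB1B hb)⟩

lemma exists_natCast_coeffs_of_mem_span (h : IsSimpleSystem R Rpos B) (hB1B : B1 ⊆ B)
    {γ : V} (hγ : γ ∈ Rpos) (hγ1 : γ ∈ Submodule.span ℝ (B1 : Set V)) :
    ∃ c : V → ℕ, γ = ∑ b ∈ B1, (c b : ℝ) • b := by
  obtain ⟨c, hc⟩ := h.exists_natCast_coeffs γ hγ
  refine ⟨c, hc.trans (Finset.sum_subset hB1B fun b hb hb1 => ?_).symm⟩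
  obtain ⟨φ, hφ⟩ := exists_linearMap_eq_on h.linearIndependent fun b' => if b' = b then 1 else 0
  have hker : Submodule.span ℝ (B1 : Set V) ≤ LinearMap.ker φ :=
    Submodule.span_le.mpr fun b' hb' => by
      simp [hφ b' (hB1B hb'), ne_of_mem_of_not_mem hb' hb1]
  have hφγ := hker hγ1
  rw [LinearMap.mem_ker, hc, apply_sum_smul_of_eqOn hφ] at hφγ
  simp_all

lemma one_le_apply_of_mem (h : IsSimpleSystem R Rpos B) (hB1B : B1 ⊆ B)
    (hR1 : ∀ α, α ∈ R1 ↔ α ∈ R ∧ α ∈ Submodule.span ℝ (B1 : Set V)) {ht : V →ₗ[ℝ] ℝ}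
    (hht : ∀ b ∈ B1, ht b = 1) {γ : V} (hγ : γ ∈ R1 ∩ Rpos) : 1 ≤ ht γ := by
  rw [Finset.mem_inter, hR1] at hγ
  obtain ⟨⟨hγR, hγ1⟩, hγpos⟩ := hγ
  obtain ⟨c, rfl⟩ := h.exists_natCast_coeffs_of_mem_span hB1B hγpos hγ1
  rw [apply_sum_natCast_smul_of_eq_one hht, Nat.one_le_cast, Nat.one_le_iff_ne_zero]
  intro hzero
  refine h.ne_zero _ hγR (Finset.sum_eq_zero fun b hb => ?_)
  simp [Finset.sum_eq_zero_iff.mp hzero b hb]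

lemma map_mem_and_apply_le_apply_map (h : IsSimpleSystem R Rpos B) (hB1B : B1 ⊆ B)
    (hR1 : ∀ α, α ∈ R1 ↔ α ∈ R ∧ α ∈ Submodule.span ℝ (B1 : Set V)) {ht : V →ₗ[ℝ] ℝ}
    (hht : ∀ b ∈ B, ht b = if b ∈ B1 then 1 else 0) (w : V ≃ₗ[ℝ] V)
    (hwR1 : R1.image w = R1) (himg : B1.image w ⊆ R1 ∩ Rpos) {γ : V} (hγ : γ ∈ R1 ∩ Rpos) :
    w γ ∈ R1 ∩ Rpos ∧ ht γ ≤ ht (w γ) := by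
  have hht1 : ∀ b ∈ B1, ht b = 1 := fun b hb => by rw [hht b (hB1B hb), if_pos hb]
  have hwγ1 : w γ ∈ R1 := hwR1 ▸ Finset.mem_image_of_mem _ (Finset.mem_inter.mp hγ).1
  have hle : ht γ ≤ ht (w γ) := by
    obtain ⟨c, hc⟩ := h.exists_natCast_coeffs_of_mem_span hB1B (Finset.mem_inter.mp hγ).2
      ((hR1 γ).mp (Finset.mem_inter.mp hγ).1).2
    rw [hc, apply_sum_smul_of_eqOn hht1, map_sum, map_sum]
    refine Finset.sum_le_sum fun b hb => ?_
    rw [map_smul, map_smul, smul_eq_mul]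
    exact mul_le_mul_of_nonneg_left
      (h.one_le_apply_of_mem hB1B hR1 hht1 (himg (Finset.mem_image_of_mem _ hb)))
      (Nat.cast_nonneg _)
  have hpos : 0 < ht (w γ) := by linarith [h.one_le_apply_of_mem hB1B hR1 hht1 hγ]
  refine ⟨Finset.mem_inter.mpr ⟨hwγ1, h.mem_pos_of_apply_pos (φ := ht) (fun b hb => ?_)
    ((hR1 _).mp hwγ1).1 hpos⟩, hle⟩
  rw [hht b hb]
  positivity

lemma image_eq_of_image_subset_pos (h : IsSimpleSystem R Rpos B) (hB1B : B1 ⊆ B)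
    (hR1 : ∀ α, α ∈ R1 ↔ α ∈ R ∧ α ∈ Submodule.span ℝ (B1 : Set V)) (w : V ≃ₗ[ℝ] V)
    (hwR1 : R1.image w = R1) (himg : B1.image w ⊆ R1 ∩ Rpos) : B1.image w = B1 := by
  obtain ⟨ht, hht⟩ := exists_linearMap_eq_on h.linearIndependent fun b => if b ∈ B1 then 1 else 0
  have hht1 : ∀ b ∈ B1, ht b = 1 := fun b hb => by rw [hht b (hB1B hb), if_pos hb]
  have hstep := fun γ (hγ : γ ∈ R1 ∩ Rpos) =>
    h.map_mem_and_apply_le_apply_map hB1B hR1 hht w hwR1 himg hγ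
  have hperm : (R1 ∩ Rpos).image w = R1 ∩ Rpos :=
    Finset.eq_of_subset_of_card_le (Finset.image_subset_iff.mpr fun γ hγ => (hstep γ hγ).1)
      (Finset.card_image_of_injective _ w.injective).ge
  have hpreserve : ∀ γ ∈ R1 ∩ Rpos, ht γ = ht (w γ) := by
    refine (Finset.sum_eq_sum_iff_of_le fun γ hγ => (hstep γ hγ).2).mp ?_
    conv_lhs => rw [← hperm]
    exact Finset.sum_image fun x _ y _ hxy => w.injective hxy
  have hmaps : ∀ b ∈ B1, w b ∈ B1 := by
    intro b hb
    have hwb := himg (Finset.mem_image_of_mem _ hb)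
    rw [Finset.mem_inter, hR1] at hwb
    obtain ⟨c, hc⟩ := h.exists_natCast_coeffs_of_mem_span hB1B hwb.2 hwb.1.2
    have hone : ((∑ b' ∈ B1, c b' : ℕ) : ℝ) = 1 := by
      rw [← apply_sum_natCast_smul_of_eq_one hht1, ← hc,
        ← hpreserve b (h.subset_inter_pos hB1B hR1 hb), hht1 b hb]
    exact hc ▸ mem_of_sum_natCast_smul_of_sum_eq_one (by exact_mod_cast hone)
  exact Finset.eq_of_subset_of_card_le (Finset.image_subset_iff.mpr hmaps)
    (Finset.card_image_of_injective _ w.injective).ge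

end IsSimpleSystem

end LinearAlgebra

section InnerProduct

variable {V : Type*} [NormedAddCommGroup V] [InnerProductSpace ℝ V]

section Reflection

variable {α : V} {r : V → V}

lemma reflection_apply_self_eq_neg (hr : ∀ x, r x = x - (2 * ⟪x, α⟫ / ⟪α, α⟫) • α)
    (hα : α ≠ 0) : r α = -α := by
  rw [hr, mul_div_assoc, div_self (inner_self_ne_zero.mpr hα), mul_one, two_smul]
  abel

lemma reflection_involutive_of_apply (hr : ∀ x, r x = x - (2 * ⟪x, α⟫ / ⟪α, α⟫) • α)
    (hα : α ≠ 0) : Function.Involutive r := by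
  intro x
  have hαα : ⟪α, α⟫ ≠ 0 := inner_self_ne_zero.mpr hα
  have hcoeff :
      2 * ⟪x - (2 * ⟪x, α⟫ / ⟪α, α⟫) • α, α⟫ / ⟪α, α⟫ = -(2 * ⟪x, α⟫ / ⟪α, α⟫) := by
    rw [inner_sub_left, real_inner_smul_left]
    field_simp
    ring
  rw [hr (r x), hr x, hcoeff, neg_smul, sub_neg_eq_add, sub_add_cancel]

end Reflection

namespace IsSimpleSystem

variable {R Rpos B : Finset V}

/-- The positive root `β ≠ α` has a positive coordinate at some simple root `b₀ ≠ α`, which the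
reflection in `α` does not change. -/
lemma reflection_mem_pos_of_ne (h : IsSimpleSystem R Rpos B) {α : V} (hα : α ∈ B) {r : V → V}
    (hr : ∀ x, r x = x - (2 * ⟪x, α⟫ / ⟪α, α⟫) • α) (hrR : ∀ β ∈ R, r β ∈ R) {β : V}
    (hβ : β ∈ Rpos) (hne : β ≠ α) : r β ∈ Rpos ∧ r β ≠ α := by
  obtain ⟨c, hc⟩ := h.exists_natCast_coeffs β hβ
  obtain ⟨b₀, hb₀, hb₀α, hcb₀⟩ := h.exists_coeff_ne_zero_of_ne hα (h.pos_subset hβ) hne hc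
  obtain ⟨φ, hφ⟩ := exists_linearMap_eq_on h.linearIndependent fun b => if b = b₀ then 1 else 0
  have hφα : φ α = 0 := by rw [hφ α hα, if_neg hb₀α.symm]
  have hφrβ : 0 < φ (r β) := by
    rw [hr, map_sub, map_smul, hφα, smul_zero, sub_zero, hc, apply_sum_smul_of_eqOn hφ]
    simpa [hb₀] using Nat.pos_of_ne_zero hcb₀
  refine ⟨h.mem_pos_of_apply_pos (fun b hb => ?_) (hrR β (h.pos_subset hβ)) hφrβ,
    fun hrβ => by rw [hrβ, hφα] at hφrβ; exact lt_irrefl _ hφrβ⟩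
  rw [hφ b hb]
  positivity

lemma card_inversions_lt_comp_iff (h : IsSimpleSystem R Rpos B) {α : V} (hα : α ∈ B)
    {r : V → V} (hr : ∀ x, r x = x - (2 * ⟪x, α⟫ / ⟪α, α⟫) • α) (hrR : ∀ β ∈ R, r β ∈ R)
    (w : V ≃ₗᵢ[ℝ] V) (hwα : w α ∈ R) :
    (inversions Rpos w).card < (inversions Rpos (w ∘ r)).card ↔ w α ∈ Rpos := by
  have hα0 := h.ne_zero α (h.simple_mem hα)
  have hαpos := h.simple_subset hα
  have herase := card_erase_inversions_comp (reflection_involutive_of_apply hr hα0)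
    (fun β hβ hne => h.reflection_mem_pos_of_ne hα hr hrR hβ hne) w
  have hcomp : α ∈ inversions Rpos (w ∘ r) ↔ w α ∈ Rpos := by
    simp [inversions, hαpos, reflection_apply_self_eq_neg hr hα0]
  by_cases hpos : w α ∈ Rpos
  · have hα_not : α ∉ inversions Rpos w := by
      simpa [inversions] using fun _ => fun hneg => h.not_pos_and_neg_pos _ hwα ⟨hpos, hneg⟩
    rw [Finset.erase_eq_of_notMem hα_not] at herase
    have := Finset.card_erase_add_one (hcomp.mpr hpos)
    exact iff_of_true (by omega) hpos
  · have hα_mem : α ∈ inversions Rpos w := by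
      simpa [inversions, hαpos] using (h.pos_or_neg_pos _ hwα).resolve_left hpos
    rw [Finset.erase_eq_of_notMem (mt hcomp.mp hpos)] at herase
    have := Finset.card_erase_add_one hα_mem
    exact iff_of_false (by omega) hpos

end IsSimpleSystem

end InnerProduct

theorem stmt_2_general
    {V : Type*} [NormedAddCommGroup V] [InnerProductSpace ℝ V]
    (R : Finset V)
    (hR0 : ∀ α ∈ R, α ≠ 0)
    (hRred : ∀ α ∈ R, ∀ t : ℝ, t • α ∈ R → t = 1 ∨ t = -1)
    (s : V → (V ≃ₗᵢ[ℝ] V))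
    (hs : ∀ α ∈ R, ∀ x : V, s α x = x - (2 * ⟪x, α⟫ / ⟪α, α⟫) • α)
    (hRs : ∀ α ∈ R, ∀ β ∈ R, s α β ∈ R)
    (Rpos : Finset V) (hRposSub : Rpos ⊆ R)
    (hRsplit : ∀ α ∈ R, (α ∈ Rpos ∨ -α ∈ Rpos) ∧ ¬(α ∈ Rpos ∧ -α ∈ Rpos))
    (B : Finset V) (hBsub : B ⊆ Rpos)
    (hBindep : LinearIndependent ℝ (Subtype.val : {x : V // x ∈ B} → V))
    (hBgen : ∀ α ∈ Rpos, ∃ c : V → ℕ, α = ∑ b ∈ B, (c b : ℝ) • b)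
    (B1 : Finset V) (hB1B : B1 ⊆ B)
    (R1 : Finset V)
    (hR1 : ∀ α, α ∈ R1 ↔ α ∈ R ∧ (α : V) ∈ Submodule.span ℝ (B1 : Set V))
    (w : V ≃ₗᵢ[ℝ] V)
    (hwR1 : Finset.image (fun α => w α) R1 = R1) :
    (Finset.image (fun α => w α) B1 = B1 ↔
        Finset.image (fun α => w α) B1 ⊆ R1 ∩ Rpos) ∧
    (Finset.image (fun α => w α) B1 = B1 ↔
        ∀ α ∈ B1, (Rpos.filter (fun β => -(w β) ∈ Rpos)).card <
          (Rpos.filter (fun β => -((w * s α) β) ∈ Rpos)).card) := by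
  have h : IsSimpleSystem R Rpos B := ⟨hR0, hRred, hRposSub, fun α hα => (hRsplit α hα).1,
    fun α hα => (hRsplit α hα).2, hBsub, hBindep, hBgen⟩
  have hB1pos := h.subset_inter_pos hB1B hR1
  have hwB1R1 : ∀ α ∈ B1, w α ∈ R1 := fun α hα =>
    hwR1 ▸ Finset.mem_image_of_mem _ (Finset.mem_inter.mp (hB1pos hα)).1
  have hlen : ∀ α ∈ B1, (inversions Rpos w).card < (inversions Rpos (w ∘ s α)).card ↔
      w α ∈ Rpos := fun α hα =>
    h.card_inversions_lt_comp_iff (hB1B hα) (hs α (h.simple_mem (hB1B hα)))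
      (hRs α (h.simple_mem (hB1B hα))) w ((hR1 _).mp (hwB1R1 α hα)).1
  have h12 : B1.image w = B1 ↔ B1.image w ⊆ R1 ∩ Rpos :=
    ⟨fun heq => heq.symm ▸ hB1pos, h.image_eq_of_image_subset_pos hB1B hR1 w.toLinearEquiv hwR1⟩
  refine ⟨h12, h12.trans ?_⟩
  simp only [Finset.image_subset_iff, Finset.mem_inter]
  exact forall₂_congr fun α hα => (and_iff_right (hwB1R1 α hα)).trans (hlen α hα).symm

/-- Context: `R` is a finite crystallographic root system in a real inner product
space `V`, with Weyl group `W` (generated by the reflections `s α`), positive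
system `Rpos`, simple roots `B`; `B1 ⊆ B` and `R1` is the subroot system with
simple roots `B1`, with positive roots `R1 ∩ Rpos` and Weyl group `W1`. -/
theorem stmt_2
    {V : Type*} [NormedAddCommGroup V] [InnerProductSpace ℝ V]
    (R : Finset V)
    (hR0 : ∀ α ∈ R, α ≠ 0)
    (hRcrys : ∀ α ∈ R, ∀ β ∈ R, ∃ n : ℤ, 2 * ⟪β, α⟫ / ⟪α, α⟫ = (n : ℝ))
    (hRred : ∀ α ∈ R, ∀ t : ℝ, t • α ∈ R → t = 1 ∨ t = -1)
    (s : V → (V ≃ₗᵢ[ℝ] V))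
    (hs : ∀ α ∈ R, ∀ x : V, s α x = x - (2 * ⟪x, α⟫ / ⟪α, α⟫) • α)
    (hRs : ∀ α ∈ R, ∀ β ∈ R, s α β ∈ R)
    (W : Subgroup (V ≃ₗᵢ[ℝ] V))
    (hW : W = Subgroup.closure {g | ∃ α ∈ R, g = s α})
    (Rpos : Finset V) (hRposSub : Rpos ⊆ R)
    (hRsplit : ∀ α ∈ R, (α ∈ Rpos ∨ -α ∈ Rpos) ∧ ¬(α ∈ Rpos ∧ -α ∈ Rpos))
    (B : Finset V) (hBsub : B ⊆ Rpos)
    (hBindep : LinearIndependent ℝ (Subtype.val : {x : V // x ∈ B} → V))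
    (hBgen : ∀ α ∈ Rpos, ∃ c : V → ℕ, α = ∑ b ∈ B, (c b : ℝ) • b)
    (B1 : Finset V) (hB1B : B1 ⊆ B)
    (R1 : Finset V)
    (hR1 : ∀ α, α ∈ R1 ↔ α ∈ R ∧ (α : V) ∈ Submodule.span ℝ (B1 : Set V))
    (w : V ≃ₗᵢ[ℝ] V) (hwW : w ∈ W)
    (hwR1 : Finset.image (fun α => w α) R1 = R1) :
    (Finset.image (fun α => w α) B1 = B1 ↔
        Finset.image (fun α => w α) B1 ⊆ R1 ∩ Rpos) ∧
    (Finset.image (fun α => w α) B1 = B1 ↔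
        ∀ α ∈ B1, (Rpos.filter (fun β => -(w β) ∈ Rpos)).card <
          (Rpos.filter (fun β => -((w * s α) β) ∈ Rpos)).card) :=
  stmt_2_general R hR0 hRred s hs hRs Rpos hRposSub hRsplit B hBsub hBindep hBgen B1 hB1B R1 hR1 w
    hwR1
end

section
/- Set T = {w ∈ W | w(B₁) = B₁}. Then W₀ is the semidirect product of the normal subgroup W₁ by the subgroup T; that is, T normalizes W₁, W₀ = W₁·T, and W₁ ∩ T = {1}. -/
/-!
Coordinates with respect to the simple roots are read off by a family of functionals `c b`
biorthogonal to `B`, and the height of a root is the sum of its coordinates.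

An element `t` permuting `B₁` preserves `R₁ = R ∩ span B₁`, so it normalizes `W₁` because
`t s_α t⁻¹ = s_{t α}`. By induction on the height, `W₁` is generated by the simple reflections
`s_b`, `b ∈ B₁`. For `w ∈ W₀`, as long as `w b < 0` for some `b ∈ B₁`, replacing `w` by `w s_b`
strictly decreases the number of roots of `R₁⁺` sent to negative roots; this yields `v ∈ W₁` such
that `t = w v` sends `B₁`, hence `R₁⁺`, to positive roots. Then `t` permutes `R₁⁺`, and comparing
heights shows that `t` permutes `B₁`, so `w = (t v⁻¹ t⁻¹) t ∈ W₁ T`. Finally, an element of `W₁`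
sending every `b ∈ B₁` to a positive root is trivial: write it as a word in simple reflections and
shorten the word with the exchange condition.
-/

open scoped Classical RealInnerProductSpace

section Biorthogonal

variable {K V : Type*} [Field K] [AddCommGroup V] [Module K V]

def IsBiorthogonal (B : Finset V) (c : V → Module.Dual K V) : Prop :=
  ∀ b ∈ B, ∀ b' ∈ B, c b b' = if b' = b then 1 else 0

theorem exists_isBiorthogonal {B : Finset V}
    (hB : LinearIndependent K (Subtype.val : {x : V // x ∈ B} → V)) :
    ∃ c : V → Module.Dual K V, IsBiorthogonal B c := by
  have hB' : LinearIndepOn K id (B : Set V) := hB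
  let E := Module.Basis.extend hB'
  have hE : ∀ b ∈ B, b ∈ hB'.extend (Set.subset_univ _) := fun b hb => hB'.subset_extend _ hb
  refine ⟨fun b => if hb : b ∈ B then E.coord ⟨b, hE b hb⟩ else 0, fun b hb b' hb' => ?_⟩
  have h := E.repr_self ⟨b', hE b' hb'⟩
  rw [Module.Basis.extend_apply_self] at h
  simp only [dif_pos hb, Module.Basis.coord_apply, h, Finsupp.single_apply, Subtype.mk.injEq]

namespace IsBiorthogonal

variable {B : Finset V} {c : V → Module.Dual K V}

theorem mono (hc : IsBiorthogonal B c) {B' : Finset V} (h : B' ⊆ B) : IsBiorthogonal B' c :=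
  fun b hb b' hb' => hc b (h hb) b' (h hb')

theorem apply_sum (hc : IsBiorthogonal B c) (f : V → K) {b : V} (hb : b ∈ B) :
    c b (∑ x ∈ B, f x • x) = f b := by
  rw [map_sum, Finset.sum_eq_single_of_mem b hb fun x hx hxb => by
    rw [map_smul, hc b hb x hx, if_neg hxb, smul_zero]]
  rw [map_smul, hc b hb b hb, if_pos rfl, smul_eq_mul, mul_one]

theorem eq_sum (hc : IsBiorthogonal B c) {v : V} (hv : v ∈ Submodule.span K (B : Set V)) :
    v = ∑ b ∈ B, c b v • b := by
  obtain ⟨f, -, rfl⟩ := Submodule.mem_span_finset.1 hv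
  exact Finset.sum_congr rfl fun b hb => by rw [hc.apply_sum f hb]

theorem apply_map_eq_sum (hc : IsBiorthogonal B c) {F : Type*} [FunLike F V V]
    [LinearMapClass F K V V] (u : F) (f : Module.Dual K V) {v : V}
    (hv : v ∈ Submodule.span K (B : Set V)) :
    f (u v) = ∑ b ∈ B, c b v * f (u b) := by
  conv_lhs => rw [hc.eq_sum hv]
  simp only [map_sum, map_smul, smul_eq_mul]

theorem exists_ne_zero (hc : IsBiorthogonal B c) {v : V} (hv : v ∈ Submodule.span K (B : Set V))
    (h0 : v ≠ 0) : ∃ b ∈ B, c b v ≠ 0 := by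
  by_contra! h
  exact h0 (by rw [hc.eq_sum hv]; exact Finset.sum_eq_zero fun b hb => by rw [h b hb, zero_smul])

theorem mem_of_mem_span (hc : IsBiorthogonal B c) {B' : Finset V} (h : B' ⊆ B) {b : V}
    (hb : b ∈ B) (hspan : b ∈ Submodule.span K (B' : Set V)) : b ∈ B' := by
  by_contra hb'
  have hker : Submodule.span K (B' : Set V) ≤ LinearMap.ker (c b) :=
    Submodule.span_le.2 fun x hx => by
      rw [SetLike.mem_coe, LinearMap.mem_ker, hc b hb x (h hx),
        if_neg (ne_of_mem_of_not_mem hx hb')]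
  have := hker hspan
  rw [LinearMap.mem_ker, hc b hb b hb, if_pos rfl] at this
  exact one_ne_zero this

end IsBiorthogonal

end Biorthogonal

section Reflection

variable {V : Type*} [NormedAddCommGroup V] [InnerProductSpace ℝ V]

def IsReflection (α : V) (r : V ≃ₗᵢ[ℝ] V) : Prop :=
  ∀ x, r x = x - (2 * ⟪x, α⟫ / ⟪α, α⟫) • α

namespace IsReflection

variable {α : V} {r : V ≃ₗᵢ[ℝ] V}

theorem apply_self (h : IsReflection α r) : r α = -α := by
  rcases eq_or_ne α 0 with rfl | hα
  · simp
  rw [h, mul_div_assoc, div_self (inner_self_ne_zero.2 hα), mul_one, two_smul]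
  abel

theorem apply_apply (h : IsReflection α r) (x : V) : r (r x) = x := by
  conv_lhs => rw [h x]
  rw [map_sub, map_smul, h.apply_self, h x]
  module

theorem mul_self (h : IsReflection α r) : r * r = 1 :=
  LinearIsometryEquiv.ext h.apply_apply

theorem inv_eq (h : IsReflection α r) : r⁻¹ = r :=
  inv_eq_of_mul_eq_one_right h.mul_self

theorem eq (h : IsReflection α r) {r' : V ≃ₗᵢ[ℝ] V} (h' : IsReflection α r') : r = r' :=
  LinearIsometryEquiv.ext fun x => by rw [h x, h' x]

theorem neg (h : IsReflection α r) : IsReflection (-α) r := fun x => by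
  rw [h x, inner_neg_right, inner_neg_neg, mul_neg, neg_div, neg_smul_neg]

theorem conj_eq (h : IsReflection α r) (g : V ≃ₗᵢ[ℝ] V) {r' : V ≃ₗᵢ[ℝ] V}
    (h' : IsReflection (g α) r') : g * r * g⁻¹ = r' := by
  rw [mul_inv_eq_iff_eq_mul]
  ext x
  change g (r x) = r' (g x)
  rw [h x, h' (g x), map_sub, map_smul, LinearIsometryEquiv.inner_map_map,
    LinearIsometryEquiv.inner_map_map]

theorem apply_mem (h : IsReflection α r) {p : Submodule ℝ V} (hα : α ∈ p) {x : V} (hx : x ∈ p) :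
    r x ∈ p := by
  rw [h x]
  exact p.sub_mem hx (p.smul_mem _ hα)

end IsReflection

end Reflection

theorem Finset.image_eq_self_iff_of_injective {α : Type*} [DecidableEq α] {f : α → α}
    (hf : Function.Injective f) (S : Finset α) : S.image f = S ↔ ∀ x ∈ S, f x ∈ S := by
  refine ⟨fun h x hx => h ▸ Finset.mem_image_of_mem _ hx, fun h => ?_⟩
  refine Finset.eq_of_subset_of_card_le (Finset.image_subset_iff.2 h) ?_
  rw [Finset.card_image_of_injective _ hf]

section Subgroups

variable {V : Type*} [NormedAddCommGroup V] [InnerProductSpace ℝ V]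

def finsetStabilizer (S : Finset V) : Subgroup (V ≃ₗᵢ[ℝ] V) where
  carrier := {g | S.image (fun x => g x) = S}
  one_mem' := by simp
  mul_mem' {g h} hg hh := (Finset.image_eq_self_iff_of_injective (g * h).injective S).2
    fun x hx => (Finset.image_eq_self_iff_of_injective g.injective S).1 hg _
      ((Finset.image_eq_self_iff_of_injective h.injective S).1 hh x hx)
  inv_mem' {g} hg := (Finset.image_eq_self_iff_of_injective g⁻¹.injective S).2 fun x hx => by
    have hg : S.image (fun x => g x) = S := hg
    obtain ⟨y, hy, rfl⟩ := Finset.mem_image.1 (hg ▸ hx)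
    simpa using hy

theorem mem_finsetStabilizer {S : Finset V} {g : V ≃ₗᵢ[ℝ] V} :
    g ∈ finsetStabilizer S ↔ ∀ x ∈ S, g x ∈ S :=
  Finset.image_eq_self_iff_of_injective g.injective S

def reflectionSubgroup (s : V → V ≃ₗᵢ[ℝ] V) (S : Finset V) : Subgroup (V ≃ₗᵢ[ℝ] V) :=
  Subgroup.closure {g | ∃ α ∈ S, g = s α}

variable {s : V → V ≃ₗᵢ[ℝ] V} {S : Finset V}

theorem reflection_mem_reflectionSubgroup {α : V} (hα : α ∈ S) : s α ∈ reflectionSubgroup s S :=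
  Subgroup.subset_closure ⟨α, hα, rfl⟩

theorem reflectionSubgroup_mono {S' : Finset V} (h : S ⊆ S') :
    reflectionSubgroup s S ≤ reflectionSubgroup s S' :=
  Subgroup.closure_mono fun _ ⟨α, hα, hg⟩ => ⟨α, h hα, hg⟩

theorem reflectionSubgroup_le_finsetStabilizer {F : Finset V}
    (h : ∀ α ∈ S, ∀ x ∈ F, s α x ∈ F) : reflectionSubgroup s S ≤ finsetStabilizer F :=
  (Subgroup.closure_le _).2 fun _ ⟨α, hα, hg⟩ => hg ▸ mem_finsetStabilizer.2 (h α hα)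

theorem conj_mem_reflectionSubgroup (hS : ∀ α ∈ S, IsReflection α (s α)) {t : V ≃ₗᵢ[ℝ] V}
    (ht : ∀ α ∈ S, t α ∈ S) {u : V ≃ₗᵢ[ℝ] V} (hu : u ∈ reflectionSubgroup s S) :
    t * u * t⁻¹ ∈ reflectionSubgroup s S := by
  suffices reflectionSubgroup s S ≤ (reflectionSubgroup s S).comap (MulAut.conj t).toMonoidHom
    from this hu
  refine (Subgroup.closure_le _).2 fun _ ⟨α, hα, hg⟩ => ?_
  simp only [hg, SetLike.mem_coe, Subgroup.mem_comap, MulEquiv.coe_toMonoidHom, MulAut.conj_apply,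
    (hS α hα).conj_eq t (hS (t α) (ht α hα))]
  exact reflection_mem_reflectionSubgroup (ht α hα)

theorem exists_list_of_mem_reflectionSubgroup (hS : ∀ α ∈ S, IsReflection α (s α))
    {g : V ≃ₗᵢ[ℝ] V} (hg : g ∈ reflectionSubgroup s S) :
    ∃ l : List (V ≃ₗᵢ[ℝ] V), (∀ x ∈ l, ∃ α ∈ S, x = s α) ∧ l.prod = g := by
  have hinv : {g | ∃ α ∈ S, g = s α}⁻¹ = {g | ∃ α ∈ S, g = s α} := by
    ext x
    simp only [Set.mem_inv, Set.mem_ofPred_eq]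
    refine exists_congr fun α => and_congr_right fun hα => ?_
    rw [inv_eq_iff_eq_inv, (hS α hα).inv_eq]
  have hg' : g ∈ (reflectionSubgroup s S).toSubmonoid := hg
  rw [reflectionSubgroup, Subgroup.closure_toSubmonoid, hinv, Set.union_self] at hg'
  exact Submonoid.exists_list_of_mem_closure hg'

end Subgroups

section SimpleSystem

variable {V : Type*} [AddCommGroup V] [Module ℝ V]

structure IsSimpleSystem_s3 (R Rpos B : Finset V) : Prop where
  pos_subset : Rpos ⊆ R
  mem_or_neg_mem : ∀ α ∈ R, α ∈ Rpos ∨ -α ∈ Rpos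
  neg_notMem : ∀ α ∈ Rpos, -α ∉ Rpos
  subset_pos : B ⊆ Rpos
  exists_nat_coeff : ∀ α ∈ Rpos, ∃ n : V → ℕ, α = ∑ b ∈ B, (n b : ℝ) • b

def rootHeight (B : Finset V) (c : V → Module.Dual ℝ V) : Module.Dual ℝ V :=
  ∑ b ∈ B, c b

variable {R Rpos B : Finset V} {c : V → Module.Dual ℝ V} {α b : V}

theorem IsBiorthogonal.rootHeight_sum (hc : IsBiorthogonal B c) (f : V → ℝ) :
    rootHeight B c (∑ x ∈ B, f x • x) = ∑ x ∈ B, f x := by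
  rw [rootHeight, LinearMap.sum_apply]
  exact Finset.sum_congr rfl fun b hb => hc.apply_sum f hb

theorem IsBiorthogonal.rootHeight_apply_of_mem (hc : IsBiorthogonal B c) (hb : b ∈ B) :
    rootHeight B c b = 1 := by
  rw [rootHeight, LinearMap.sum_apply,
    Finset.sum_eq_single_of_mem b hb fun x hx hxb => by rw [hc x hx b hb, if_neg hxb.symm],
    hc b hb b hb, if_pos rfl]

namespace IsSimpleSystem_s3

theorem ne_zero (hP : IsSimpleSystem_s3 R Rpos B) (hα : α ∈ R) : α ≠ 0 := by
  rintro rfl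
  have h0 : (0 : V) ∈ Rpos := by simpa using hP.mem_or_neg_mem 0 hα
  exact hP.neg_notMem 0 h0 (by simpa using h0)

theorem mem_span (hP : IsSimpleSystem_s3 R Rpos B) (hα : α ∈ R) :
    α ∈ Submodule.span ℝ (B : Set V) := by
  have hpos : ∀ β ∈ Rpos, β ∈ Submodule.span ℝ (B : Set V) := fun β hβ => by
    obtain ⟨n, rfl⟩ := hP.exists_nat_coeff β hβ
    exact Submodule.sum_mem _ fun b hb => Submodule.smul_mem _ _ (Submodule.subset_span hb)
  rcases hP.mem_or_neg_mem α hα with h | h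
  · exact hpos α h
  · simpa using Submodule.neg_mem _ (hpos _ h)

theorem coord_nonneg (hP : IsSimpleSystem_s3 R Rpos B) (hc : IsBiorthogonal B c) (hα : α ∈ Rpos)
    (hb : b ∈ B) : 0 ≤ c b α := by
  obtain ⟨n, rfl⟩ := hP.exists_nat_coeff α hα
  rw [hc.apply_sum _ hb]
  exact Nat.cast_nonneg _

theorem mem_pos_of_coord_pos (hP : IsSimpleSystem_s3 R Rpos B) (hc : IsBiorthogonal B c)
    (hα : α ∈ R) (hb : b ∈ B) (h : 0 < c b α) : α ∈ Rpos :=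
  (hP.mem_or_neg_mem α hα).resolve_right fun hneg => by
    have := hP.coord_nonneg hc hneg hb
    rw [map_neg] at this
    linarith

theorem mem_pos_of_coord_nonneg (hP : IsSimpleSystem_s3 R Rpos B) (hc : IsBiorthogonal B c)
    (hα : α ∈ R) (h : ∀ b ∈ B, 0 ≤ c b α) : α ∈ Rpos := by
  obtain ⟨b, hb, hne⟩ := hc.exists_ne_zero (hP.mem_span hα) (hP.ne_zero hα)
  exact hP.mem_pos_of_coord_pos hc hα hb ((h b hb).lt_of_ne hne.symm)

theorem exists_rootHeight_eq_natCast (hP : IsSimpleSystem_s3 R Rpos B) (hc : IsBiorthogonal B c)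
    (hα : α ∈ Rpos) : ∃ n : ℕ, rootHeight B c α = n := by
  obtain ⟨n, rfl⟩ := hP.exists_nat_coeff α hα
  exact ⟨∑ b ∈ B, n b, by rw [hc.rootHeight_sum]; push_cast; rfl⟩

theorem exists_nat_coeff_ne_zero (hP : IsSimpleSystem_s3 R Rpos B) (hα : α ∈ Rpos) :
    ∃ n : V → ℕ, α = ∑ b ∈ B, (n b : ℝ) • b ∧ ∃ b ∈ B, n b ≠ 0 := by
  obtain ⟨n, hn⟩ := hP.exists_nat_coeff α hα
  obtain ⟨b, hb, hnb⟩ := Finset.exists_ne_zero_of_sum_ne_zero (hn ▸ hP.ne_zero (hP.pos_subset hα))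
  exact ⟨n, hn, b, hb, fun h => hnb (by rw [h, Nat.cast_zero, zero_smul])⟩

theorem one_le_rootHeight (hP : IsSimpleSystem_s3 R Rpos B) (hc : IsBiorthogonal B c)
    (hα : α ∈ Rpos) : 1 ≤ rootHeight B c α := by
  obtain ⟨n, rfl, b, hb, hnb⟩ := hP.exists_nat_coeff_ne_zero hα
  rw [hc.rootHeight_sum]
  calc (1 : ℝ) ≤ n b := by exact_mod_cast Nat.one_le_iff_ne_zero.2 hnb
    _ ≤ ∑ x ∈ B, (n x : ℝ) := Finset.single_le_sum (fun x _ => Nat.cast_nonneg (n x)) hb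

theorem mem_of_rootHeight_le_one (hP : IsSimpleSystem_s3 R Rpos B) (hc : IsBiorthogonal B c)
    (hα : α ∈ Rpos) (h : rootHeight B c α ≤ 1) : α ∈ B := by
  obtain ⟨n, rfl, b, hb, hnb⟩ := hP.exists_nat_coeff_ne_zero hα
  rw [hc.rootHeight_sum] at h
  have hsum : n b + ∑ x ∈ B.erase b, n x ≤ 1 := by
    rw [Finset.add_sum_erase B n hb]
    exact_mod_cast h
  have hrest : ∀ x ∈ B, x ≠ b → n x = 0 := fun x hx hxb => by
    have := Finset.single_le_sum (fun _ _ => Nat.zero_le _) (Finset.mem_erase.2 ⟨hxb, hx⟩) (f := n)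
    omega
  rw [Finset.sum_eq_single_of_mem b hb fun x hx hxb => by rw [hrest x hx hxb, Nat.cast_zero,
    zero_smul], show n b = 1 by omega, Nat.cast_one, one_smul]
  exact hb

end IsSimpleSystem_s3

end SimpleSystem

section RootSystem

variable {V : Type*} [NormedAddCommGroup V] [InnerProductSpace ℝ V]

/-- Root systems of finite reflection groups: there is no crystallographic condition. -/
structure IsRootSystem (R : Finset V) (s : V → V ≃ₗᵢ[ℝ] V) : Prop where
  isReflection : ∀ α ∈ R, IsReflection α (s α)
  reflection_mem : ∀ α ∈ R, ∀ β ∈ R, s α β ∈ R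
  eq_one_or_eq_neg_one : ∀ α ∈ R, ∀ t : ℝ, t • α ∈ R → t = 1 ∨ t = -1

variable {R Rpos B : Finset V} {s : V → V ≃ₗᵢ[ℝ] V} {c : V → Module.Dual ℝ V} {α b : V}

namespace IsRootSystem

theorem reflection_apply_mem_pos (hR : IsRootSystem R s) (hP : IsSimpleSystem_s3 R Rpos B)
    (hc : IsBiorthogonal B c) (hb : b ∈ B) (hα : α ∈ Rpos) (hne : α ≠ b) : s b α ∈ Rpos := by
  have hbR : b ∈ R := hP.pos_subset (hP.subset_pos hb)
  have hαR : α ∈ R := hP.pos_subset hα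
  obtain ⟨b', hb', hb'b, hpos⟩ : ∃ b' ∈ B, b' ≠ b ∧ 0 < c b' α := by
    by_contra! h
    have hαb : α = c b α • b := by
      conv_lhs => rw [hc.eq_sum (hP.mem_span hαR)]
      refine Finset.sum_eq_single_of_mem b hb fun x hx hxb => ?_
      rw [le_antisymm (h x hx hxb) (hP.coord_nonneg hc hα hx), zero_smul]
    rcases hR.eq_one_or_eq_neg_one b hbR _ (hαb ▸ hαR) with h1 | h1
    · exact hne (by rw [hαb, h1, one_smul])
    · rw [hαb, h1, neg_one_smul] at hα
      exact hP.neg_notMem b (hP.subset_pos hb) hα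
  refine hP.mem_pos_of_coord_pos hc (hR.reflection_mem b hbR α hαR) hb' ?_
  rwa [hR.isReflection b hbR α, map_sub, map_smul, hc b' hb' b hb, if_neg hb'b.symm, smul_zero,
    sub_zero]

theorem exists_eraseIdx_prod_eq_mul (hR : IsRootSystem R s) (hP : IsSimpleSystem_s3 R Rpos B)
    (hc : IsBiorthogonal B c) {l : List (V ≃ₗᵢ[ℝ] V)} (hl : ∀ g ∈ l, ∃ a ∈ B, g = s a)
    (hb : b ∈ B) (hneg : l.prod b ∉ Rpos) :
    ∃ i < l.length, (l.eraseIdx i).prod = l.prod * s b := by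
  induction l with
  | nil => exact absurd (hP.subset_pos hb) (by simpa using hneg)
  | cons g t ih =>
    obtain ⟨a, ha, rfl⟩ := hl g List.mem_cons_self
    have hbR := hR.isReflection b (hP.pos_subset (hP.subset_pos hb))
    by_cases ht : t.prod b ∈ Rpos
    · have hta : t.prod b = a := by
        by_contra hne
        exact hneg (by simpa using hR.reflection_apply_mem_pos hP hc ha ht hne)
      have hconj : t.prod * s b * t.prod⁻¹ = s a := by
        refine hbR.conj_eq _ ?_
        rw [hta]
        exact hR.isReflection a (hP.pos_subset (hP.subset_pos ha))
      refine ⟨0, by simp, ?_⟩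
      rw [List.eraseIdx_cons_zero, List.prod_cons, ← hconj, inv_mul_cancel_right, mul_assoc,
        hbR.mul_self, mul_one]
    · obtain ⟨i, hi, heq⟩ := ih (fun g hg => hl g (List.mem_cons_of_mem _ hg)) ht
      refine ⟨i + 1, by simpa using hi, ?_⟩
      rw [List.eraseIdx_cons_succ, List.prod_cons, List.prod_cons, heq, mul_assoc]

theorem prod_eq_one_of_forall_apply_mem_pos (hR : IsRootSystem R s)
    (hP : IsSimpleSystem_s3 R Rpos B) (hc : IsBiorthogonal B c) {B1 : Finset V} (hB1 : B1 ⊆ B)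
    {l : List (V ≃ₗᵢ[ℝ] V)} (hl : ∀ g ∈ l, ∃ a ∈ B1, g = s a)
    (hpos : ∀ b ∈ B1, l.prod b ∈ Rpos) : l.prod = 1 := by
  induction hn : l.length using Nat.strong_induction_on generalizing l with
  | _ n ih =>
  rcases l.eq_nil_or_concat with rfl | ⟨L, g, rfl⟩
  · rfl
  obtain ⟨b, hb, rfl⟩ := hl g (by simp)
  have hL : ∀ g ∈ L, ∃ a ∈ B1, g = s a := fun g hg => hl g (by simp [hg])
  have hprod : (L.concat (s b)).prod = L.prod * s b := by simp
  have hLb : L.prod b ∉ Rpos := fun h => by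
    have := hpos b hb
    rw [hprod, LinearIsometryEquiv.coe_mul, Function.comp_apply,
      (hR.isReflection b (hP.pos_subset (hP.subset_pos (hB1 hb)))).apply_self, map_neg] at this
    exact hP.neg_notMem _ h this
  obtain ⟨i, hi, heq⟩ := hR.exists_eraseIdx_prod_eq_mul hP hc
    (fun g hg => (hL g hg).imp fun a ⟨ha, hga⟩ => ⟨hB1 ha, hga⟩) (hB1 hb) hLb
  rw [hprod, ← heq]
  refine ih _ ?_ (fun g hg => hL g (List.mem_of_mem_eraseIdx hg)) (by rwa [heq, ← hprod]) rfl
  rw [← hn, List.length_eraseIdx_of_lt hi]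
  simp

end IsRootSystem

end RootSystem

section Subsystem

variable {V : Type*} [NormedAddCommGroup V] [InnerProductSpace ℝ V]
  {R Rpos B B1 R1 : Finset V} {s : V → V ≃ₗᵢ[ℝ] V} {c : V → Module.Dual ℝ V} {α b : V}

theorem IsBiorthogonal.rootHeight_reflection_lt (hc : IsBiorthogonal B c)
    {r : V ≃ₗᵢ[ℝ] V} (hr : IsReflection b r) (hb : b ∈ B) (hαb : 0 < ⟪α, b⟫) :
    rootHeight B c (r α) < rootHeight B c α := by
  have hb0 : b ≠ 0 := by rintro rfl; simp at hαb
  have hk : 0 < 2 * ⟪α, b⟫ / ⟪b, b⟫ := div_pos (by linarith) (real_inner_self_pos.2 hb0)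
  rw [hr α, map_sub, map_smul, hc.rootHeight_apply_of_mem hb, smul_eq_mul, mul_one]
  linarith

namespace IsSimpleSystem_s3

theorem subset_subsystem (hP : IsSimpleSystem_s3 R Rpos B) (hB1 : B1 ⊆ B)
    (hR1 : ∀ α, α ∈ R1 ↔ α ∈ R ∧ α ∈ Submodule.span ℝ (B1 : Set V)) : B1 ⊆ R1 :=
  fun b hb => (hR1 b).2 ⟨hP.pos_subset (hP.subset_pos (hB1 hb)), Submodule.subset_span hb⟩

theorem exists_inner_pos (hP : IsSimpleSystem_s3 R Rpos B) (hc : IsBiorthogonal B c)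
    (hB1 : B1 ⊆ B) (hα : α ∈ Rpos) (hspan : α ∈ Submodule.span ℝ (B1 : Set V)) :
    ∃ b ∈ B1, 0 < ⟪α, b⟫ := by
  have hsum : ⟪α, α⟫ = ∑ b ∈ B1, c b α * ⟪α, b⟫ := by
    nth_rewrite 2 [(hc.mono hB1).eq_sum hspan]
    simp only [inner_sum, real_inner_smul_right]
  have hlt : ∑ _b ∈ B1, (0 : ℝ) < ∑ b ∈ B1, c b α * ⟪α, b⟫ := by
    rw [← hsum, Finset.sum_const_zero]
    exact real_inner_self_pos.2 (hP.ne_zero (hP.pos_subset hα))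
  obtain ⟨b, hb, hpos⟩ := Finset.exists_lt_of_sum_lt hlt
  exact ⟨b, hb, pos_of_mul_pos_right hpos (hP.coord_nonneg hc hα (hB1 hb))⟩

variable {F : Type*} [FunLike F V V] [LinearMapClass F ℝ V V]

theorem apply_mem_pos (hP : IsSimpleSystem_s3 R Rpos B) (hc : IsBiorthogonal B c) (hB1 : B1 ⊆ B)
    (u : F) (hu : ∀ b ∈ B1, u b ∈ Rpos) (hα : α ∈ Rpos)
    (hspan : α ∈ Submodule.span ℝ (B1 : Set V)) (huα : u α ∈ R) : u α ∈ Rpos :=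
  hP.mem_pos_of_coord_nonneg hc huα fun x hx => by
    rw [(hc.mono hB1).apply_map_eq_sum u (c x) hspan]
    exact Finset.sum_nonneg fun b hb =>
      mul_nonneg (hP.coord_nonneg hc hα (hB1 hb)) (hP.coord_nonneg hc (hu b hb) hx)

theorem rootHeight_le_rootHeight_apply (hP : IsSimpleSystem_s3 R Rpos B) (hc : IsBiorthogonal B c)
    (hB1 : B1 ⊆ B) (u : F) (hu : ∀ b ∈ B1, u b ∈ Rpos) (hα : α ∈ Rpos)
    (hspan : α ∈ Submodule.span ℝ (B1 : Set V)) :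
    rootHeight B c α ≤ rootHeight B c (u α) := by
  rw [(hc.mono hB1).apply_map_eq_sum u _ hspan]
  conv_lhs => rw [(hc.mono hB1).eq_sum hspan, map_sum]
  refine Finset.sum_le_sum fun b hb => ?_
  rw [map_smul, hc.rootHeight_apply_of_mem (hB1 hb), smul_eq_mul, mul_one]
  exact le_mul_of_one_le_right (hP.coord_nonneg hc hα (hB1 hb))
    (hP.one_le_rootHeight hc (hu b hb))

theorem apply_mem_of_mem_finsetStabilizer (hP : IsSimpleSystem_s3 R Rpos B)
    (hc : IsBiorthogonal B c) (hB1 : B1 ⊆ B)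
    (hR1 : ∀ α, α ∈ R1 ↔ α ∈ R ∧ α ∈ Submodule.span ℝ (B1 : Set V)) {t : V ≃ₗᵢ[ℝ] V}
    (ht : t ∈ finsetStabilizer (R1 ∩ Rpos)) (hb : b ∈ B1) : t b ∈ B1 := by
  have hB1pos : ∀ b ∈ B1, b ∈ R1 ∩ Rpos := fun b hb =>
    Finset.mem_inter.2 ⟨hP.subset_subsystem hB1 hR1 hb, hP.subset_pos (hB1 hb)⟩
  have htinv : ∀ b ∈ B1, t⁻¹ b ∈ Rpos := fun b hb =>
    (Finset.mem_inter.1 (mem_finsetStabilizer.1 (inv_mem ht) b (hB1pos b hb))).2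
  obtain ⟨htb1, htbpos⟩ := Finset.mem_inter.1 (mem_finsetStabilizer.1 ht b (hB1pos b hb))
  have hspan := ((hR1 _).1 htb1).2
  refine hc.mem_of_mem_span hB1 (hP.mem_of_rootHeight_le_one hc htbpos ?_) hspan
  calc rootHeight B c (t b) ≤ rootHeight B c (t⁻¹ (t b)) :=
        hP.rootHeight_le_rootHeight_apply hc hB1 t⁻¹ htinv htbpos hspan
    _ = 1 := by
      rw [LinearIsometryEquiv.coe_inv, LinearIsometryEquiv.symm_apply_apply,
        hc.rootHeight_apply_of_mem (hB1 hb)]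

end IsSimpleSystem_s3

theorem apply_mem_subsystem
    (hR1 : ∀ α, α ∈ R1 ↔ α ∈ R ∧ α ∈ Submodule.span ℝ (B1 : Set V)) {t : V ≃ₗᵢ[ℝ] V}
    (htR : ∀ α ∈ R, t α ∈ R) (htB1 : ∀ b ∈ B1, t b ∈ B1) (hα : α ∈ R1) : t α ∈ R1 := by
  have hspan := Submodule.apply_mem_span_image_of_mem_span t.toLinearEquiv.toLinearMap
    ((hR1 α).1 hα).2
  refine (hR1 _).2 ⟨htR α ((hR1 α).1 hα).1, Submodule.span_mono ?_ hspan⟩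
  rintro _ ⟨b, hb, rfl⟩
  exact htB1 b hb

noncomputable def inversionSet (P Rpos : Finset V) (w : V ≃ₗᵢ[ℝ] V) : Finset V :=
  P.filter fun α => w α ∉ Rpos

theorem mem_inversionSet {P Rpos : Finset V} {w : V ≃ₗᵢ[ℝ] V} :
    α ∈ inversionSet P Rpos w ↔ α ∈ P ∧ w α ∉ Rpos :=
  Finset.mem_filter

namespace IsRootSystem

theorem reflection_mem_subsystem (hR : IsRootSystem R s)
    (hR1 : ∀ α, α ∈ R1 ↔ α ∈ R ∧ α ∈ Submodule.span ℝ (B1 : Set V)) {β : V} (hα : α ∈ R1)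
    (hβ : β ∈ R1) : s α β ∈ R1 :=
  (hR1 _).2 ⟨hR.reflection_mem α ((hR1 α).1 hα).1 β ((hR1 β).1 hβ).1,
    (hR.isReflection α ((hR1 α).1 hα).1).apply_mem ((hR1 α).1 hα).2 ((hR1 β).1 hβ).2⟩

theorem reflectionSubgroup_le_finsetStabilizer_self (hR : IsRootSystem R s)
    (hR1 : ∀ α, α ∈ R1 ↔ α ∈ R ∧ α ∈ Submodule.span ℝ (B1 : Set V)) :
    reflectionSubgroup s R1 ≤ finsetStabilizer R1 :=
  reflectionSubgroup_le_finsetStabilizer fun _ hα _ hβ => hR.reflection_mem_subsystem hR1 hα hβ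

theorem mem_finsetStabilizer_subsystem (hR : IsRootSystem R s)
    (hR1 : ∀ α, α ∈ R1 ↔ α ∈ R ∧ α ∈ Submodule.span ℝ (B1 : Set V)) {t : V ≃ₗᵢ[ℝ] V}
    (ht : t ∈ reflectionSubgroup s R) (htB1 : t ∈ finsetStabilizer B1) :
    t ∈ finsetStabilizer R1 :=
  mem_finsetStabilizer.2 fun _ hα => apply_mem_subsystem hR1
    (mem_finsetStabilizer.1 (reflectionSubgroup_le_finsetStabilizer hR.reflection_mem ht))
    (mem_finsetStabilizer.1 htB1) hα

theorem conj_mem_reflectionSubgroup_subsystem (hR : IsRootSystem R s)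
    (hR1 : ∀ α, α ∈ R1 ↔ α ∈ R ∧ α ∈ Submodule.span ℝ (B1 : Set V)) {t u : V ≃ₗᵢ[ℝ] V}
    (ht : t ∈ reflectionSubgroup s R) (htB1 : t ∈ finsetStabilizer B1)
    (hu : u ∈ reflectionSubgroup s R1) : t * u * t⁻¹ ∈ reflectionSubgroup s R1 :=
  conj_mem_reflectionSubgroup (fun α hα => hR.isReflection α ((hR1 α).1 hα).1)
    (mem_finsetStabilizer.1 (hR.mem_finsetStabilizer_subsystem hR1 ht htB1)) hu

theorem reflection_mem_reflectionSubgroup_simple (hR : IsRootSystem R s)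
    (hP : IsSimpleSystem_s3 R Rpos B) (hc : IsBiorthogonal B c) (hB1 : B1 ⊆ B)
    (hR1 : ∀ α, α ∈ R1 ↔ α ∈ R ∧ α ∈ Submodule.span ℝ (B1 : Set V)) (hα : α ∈ R1)
    (hαpos : α ∈ Rpos) : s α ∈ reflectionSubgroup s B1 := by
  obtain ⟨n, hn⟩ := hP.exists_rootHeight_eq_natCast hc hαpos
  induction n using Nat.strong_induction_on generalizing α with
  | _ n ih =>
  by_cases hαB1 : α ∈ B1
  · exact reflection_mem_reflectionSubgroup hαB1
  obtain ⟨b, hb, hαb⟩ := hP.exists_inner_pos hc hB1 hαpos ((hR1 α).1 hα).2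
  have hbR := hR.isReflection b (hP.pos_subset (hP.subset_pos (hB1 hb)))
  have hβ : s b α ∈ R1 := hR.reflection_mem_subsystem hR1 (hP.subset_subsystem hB1 hR1 hb) hα
  have hβpos : s b α ∈ Rpos :=
    hR.reflection_apply_mem_pos hP hc (hB1 hb) hαpos (ne_of_mem_of_not_mem hb hαB1).symm
  obtain ⟨m, hm⟩ := hP.exists_rootHeight_eq_natCast hc hβpos
  have hmn : m < n := by
    have := hc.rootHeight_reflection_lt hbR (hB1 hb) hαb
    rw [hm, hn] at this
    exact_mod_cast this
  have hα' : IsReflection (s b (s b α)) (s α) := by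
    rw [hbR.apply_apply]
    exact hR.isReflection α ((hR1 α).1 hα).1
  rw [← (hR.isReflection _ ((hR1 _).1 hβ).1).conj_eq (s b) hα']
  exact mul_mem (mul_mem (reflection_mem_reflectionSubgroup hb) (ih m hmn hβ hβpos hm))
    (inv_mem (reflection_mem_reflectionSubgroup hb))

theorem reflectionSubgroup_subsystem_eq_simple (hR : IsRootSystem R s)
    (hP : IsSimpleSystem_s3 R Rpos B) (hc : IsBiorthogonal B c) (hB1 : B1 ⊆ B)
    (hR1 : ∀ α, α ∈ R1 ↔ α ∈ R ∧ α ∈ Submodule.span ℝ (B1 : Set V)) :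
    reflectionSubgroup s R1 = reflectionSubgroup s B1 := by
  refine le_antisymm ((Subgroup.closure_le _).2 fun _ ⟨α, hα, hg⟩ => hg ▸ ?_)
    (reflectionSubgroup_mono (hP.subset_subsystem hB1 hR1))
  have hαR := ((hR1 α).1 hα).1
  rcases hP.mem_or_neg_mem α hαR with h | h
  · exact hR.reflection_mem_reflectionSubgroup_simple hP hc hB1 hR1 hα h
  · have hneg : -α ∈ R1 := (hR1 _).2 ⟨hP.pos_subset h, Submodule.neg_mem _ ((hR1 α).1 hα).2⟩
    rw [(hR.isReflection α hαR).eq (by simpa using (hR.isReflection _ (hP.pos_subset h)).neg)]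
    exact hR.reflection_mem_reflectionSubgroup_simple hP hc hB1 hR1 hneg h

theorem card_inversionSet_mul_lt (hR : IsRootSystem R s) (hP : IsSimpleSystem_s3 R Rpos B)
    (hc : IsBiorthogonal B c) (hB1 : B1 ⊆ B)
    (hR1 : ∀ α, α ∈ R1 ↔ α ∈ R ∧ α ∈ Submodule.span ℝ (B1 : Set V)) {w : V ≃ₗᵢ[ℝ] V}
    (hb : b ∈ B1) (hwb : w b ∈ R) (hneg : w b ∉ Rpos) :
    (inversionSet (R1 ∩ Rpos) Rpos (w * s b)).card < (inversionSet (R1 ∩ Rpos) Rpos w).card := by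
  have hbR := hR.isReflection b (hP.pos_subset (hP.subset_pos (hB1 hb)))
  have hbI : b ∈ inversionSet (R1 ∩ Rpos) Rpos w := by
    rw [mem_inversionSet, Finset.mem_inter]
    exact ⟨⟨hP.subset_subsystem hB1 hR1 hb, hP.subset_pos (hB1 hb)⟩, hneg⟩
  have hsub : inversionSet (R1 ∩ Rpos) Rpos (w * s b) ⊆
      ((inversionSet (R1 ∩ Rpos) Rpos w).erase b).image (s b) := by
    intro α hα
    rw [mem_inversionSet, Finset.mem_inter, LinearIsometryEquiv.coe_mul,
      Function.comp_apply] at hα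
    obtain ⟨⟨hα1, hαpos⟩, hαneg⟩ := hα
    have hαb : α ≠ b := by
      rintro rfl
      rw [hbR.apply_self, map_neg] at hαneg
      exact hαneg ((hP.mem_or_neg_mem _ hwb).resolve_left hneg)
    refine Finset.mem_image.2 ⟨s b α, Finset.mem_erase.2 ⟨fun h => ?_, ?_⟩, hbR.apply_apply α⟩
    · have : α = -b := by rw [← hbR.apply_apply α, h, hbR.apply_self]
      exact hP.neg_notMem b (hP.subset_pos (hB1 hb)) (this ▸ hαpos)
    · rw [mem_inversionSet, Finset.mem_inter]
      exact ⟨⟨hR.reflection_mem_subsystem hR1 (hP.subset_subsystem hB1 hR1 hb) hα1,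
        hR.reflection_apply_mem_pos hP hc (hB1 hb) hαpos hαb⟩, hαneg⟩
  calc _ ≤ (((inversionSet (R1 ∩ Rpos) Rpos w).erase b).image (s b)).card :=
        Finset.card_le_card hsub
    _ ≤ ((inversionSet (R1 ∩ Rpos) Rpos w).erase b).card := Finset.card_image_le
    _ < _ := Finset.card_erase_lt_of_mem hbI

theorem exists_forall_mul_apply_mem_pos (hR : IsRootSystem R s) (hP : IsSimpleSystem_s3 R Rpos B)
    (hc : IsBiorthogonal B c) (hB1 : B1 ⊆ B)
    (hR1 : ∀ α, α ∈ R1 ↔ α ∈ R ∧ α ∈ Submodule.span ℝ (B1 : Set V)) {w : V ≃ₗᵢ[ℝ] V}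
    (hw : ∀ α ∈ R1, w α ∈ R) :
    ∃ v ∈ reflectionSubgroup s B1, ∀ b ∈ B1, (w * v) b ∈ Rpos := by
  induction hn : (inversionSet (R1 ∩ Rpos) Rpos w).card using Nat.strong_induction_on
    generalizing w with
  | _ n ih =>
  by_cases h : ∀ b ∈ B1, w b ∈ Rpos
  · exact ⟨1, one_mem _, by simpa using h⟩
  push Not at h
  obtain ⟨b, hb, hneg⟩ := h
  have hb1 := hP.subset_subsystem hB1 hR1 hb
  obtain ⟨v, hv, hpos⟩ := ih _ (hn ▸ hR.card_inversionSet_mul_lt hP hc hB1 hR1 hb (hw b hb1) hneg)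
    (fun α hα => hw (s b α) (hR.reflection_mem_subsystem hR1 hb1 hα)) rfl
  exact ⟨s b * v, mul_mem (reflection_mem_reflectionSubgroup hb) hv,
    by simpa [mul_assoc] using hpos⟩

theorem exists_mul_mem_finsetStabilizer (hR : IsRootSystem R s) (hP : IsSimpleSystem_s3 R Rpos B)
    (hc : IsBiorthogonal B c) (hB1 : B1 ⊆ B)
    (hR1 : ∀ α, α ∈ R1 ↔ α ∈ R ∧ α ∈ Submodule.span ℝ (B1 : Set V)) {w : V ≃ₗᵢ[ℝ] V}
    (hwR1 : ∀ α ∈ R1, w α ∈ R1) :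
    ∃ v ∈ reflectionSubgroup s B1, w * v ∈ finsetStabilizer B1 := by
  obtain ⟨v, hv, hpos⟩ := hR.exists_forall_mul_apply_mem_pos hP hc hB1 hR1
    fun α hα => ((hR1 _).1 (hwR1 α hα)).1
  have hvR1 : v ∈ finsetStabilizer R1 := hR.reflectionSubgroup_le_finsetStabilizer_self hR1
    (reflectionSubgroup_mono (hP.subset_subsystem hB1 hR1) hv)
  have htR1 : ∀ α ∈ R1, (w * v) α ∈ R1 := fun α hα => hwR1 _ (mem_finsetStabilizer.1 hvR1 α hα)
  have htpos : w * v ∈ finsetStabilizer (R1 ∩ Rpos) := mem_finsetStabilizer.2 fun α hα => by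
    obtain ⟨hα1, hαpos⟩ := Finset.mem_inter.1 hα
    exact Finset.mem_inter.2 ⟨htR1 α hα1, hP.apply_mem_pos hc hB1 (w * v) hpos hαpos
      ((hR1 α).1 hα1).2 ((hR1 _).1 (htR1 α hα1)).1⟩
  exact ⟨v, hv, mem_finsetStabilizer.2 fun b hb =>
    hP.apply_mem_of_mem_finsetStabilizer hc hB1 hR1 htpos hb⟩

end IsRootSystem

end Subsystem

theorem stmt_3_general
    {V : Type*} [NormedAddCommGroup V] [InnerProductSpace ℝ V]
    (R : Finset V)
    (hRred : ∀ α ∈ R, ∀ t : ℝ, t • α ∈ R → t = 1 ∨ t = -1)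
    (s : V → (V ≃ₗᵢ[ℝ] V))
    (hs : ∀ α ∈ R, ∀ x : V, s α x = x - (2 * ⟪x, α⟫ / ⟪α, α⟫) • α)
    (hRs : ∀ α ∈ R, ∀ β ∈ R, s α β ∈ R)
    (W : Subgroup (V ≃ₗᵢ[ℝ] V))
    (hW : W = Subgroup.closure {g | ∃ α ∈ R, g = s α})
    (Rpos : Finset V) (hRposSub : Rpos ⊆ R)
    (hRsplit : ∀ α ∈ R, (α ∈ Rpos ∨ -α ∈ Rpos) ∧ ¬(α ∈ Rpos ∧ -α ∈ Rpos))
    (B : Finset V) (hBsub : B ⊆ Rpos)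
    (hBindep : LinearIndependent ℝ (Subtype.val : {x : V // x ∈ B} → V))
    (hBgen : ∀ α ∈ Rpos, ∃ c : V → ℕ, α = ∑ b ∈ B, (c b : ℝ) • b)
    (B1 : Finset V) (hB1B : B1 ⊆ B)
    (R1 : Finset V)
    (hR1 : ∀ α, α ∈ R1 ↔ α ∈ R ∧ (α : V) ∈ Submodule.span ℝ (B1 : Set V))
    (W1 : Subgroup (V ≃ₗᵢ[ℝ] V))
    (hW1 : W1 = Subgroup.closure {g | ∃ α ∈ R1, g = s α}) :
    -- T normalizes W₁
    (∀ t ∈ W, Finset.image (fun α => t α) B1 = B1 →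
        ∀ u ∈ W1, t * u * t⁻¹ ∈ W1) ∧
    -- W₀ ⊆ W₁ · T
    (∀ w ∈ W, Finset.image (fun α => w α) R1 = R1 →
        ∃ u ∈ W1, ∃ t ∈ W, Finset.image (fun α => t α) B1 = B1 ∧ w = u * t) ∧
    -- W₁ · T ⊆ W₀
    (∀ u ∈ W1, ∀ t ∈ W, Finset.image (fun α => t α) B1 = B1 →
        u * t ∈ W ∧ Finset.image (fun α => (u * t) α) R1 = R1) ∧
    -- W₁ ∩ T = {1}
    (∀ g ∈ W1, g ∈ W → Finset.image (fun α => g α) B1 = B1 → g = 1) := by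
  subst hW hW1
  have hR : IsRootSystem R s := ⟨hs, hRs, hRred⟩
  have hP : IsSimpleSystem_s3 R Rpos B := ⟨hRposSub, fun α hα => (hRsplit α hα).1,
    fun α hα hneg => (hRsplit α (hRposSub hα)).2 ⟨hα, hneg⟩, hBsub, hBgen⟩
  obtain ⟨c, hc⟩ := exists_isBiorthogonal hBindep
  have hgen := hR.reflectionSubgroup_subsystem_eq_simple hP hc hB1B hR1
  have hW1W : reflectionSubgroup s R1 ≤ reflectionSubgroup s R :=
    reflectionSubgroup_mono fun α hα => ((hR1 α).1 hα).1
  refine ⟨fun t ht htB1 u hu => hR.conj_mem_reflectionSubgroup_subsystem hR1 ht htB1 hu,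
    ?_, ?_, ?_⟩
  · intro w hw hwR1
    obtain ⟨v, hv, ht⟩ := hR.exists_mul_mem_finsetStabilizer hP hc hB1B hR1
      (mem_finsetStabilizer.1 hwR1)
    rw [← hgen] at hv
    have htW : w * v ∈ reflectionSubgroup s R := mul_mem hw (hW1W hv)
    exact ⟨w * v * v⁻¹ * (w * v)⁻¹,
      hR.conj_mem_reflectionSubgroup_subsystem hR1 htW ht (inv_mem hv), w * v, htW, ht, by group⟩
  · intro u hu t ht htB1
    exact ⟨mul_mem (hW1W hu) ht, mul_mem (hR.reflectionSubgroup_le_finsetStabilizer_self hR1 hu)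
      (hR.mem_finsetStabilizer_subsystem hR1 ht htB1)⟩
  · intro g hg _ hgB1
    obtain ⟨l, hl, rfl⟩ := exists_list_of_mem_reflectionSubgroup
      (fun α hα => hs α (hRposSub (hBsub (hB1B hα)))) (hgen.le hg)
    exact hR.prod_eq_one_of_forall_apply_mem_pos hP hc hB1B hl fun b hb =>
      hBsub (hB1B (mem_finsetStabilizer.1 hgB1 b hb))

/-- Context: `R` is a finite crystallographic root system in a real inner product
space `V`, with Weyl group `W` (generated by the reflections `s α`), positive
system `Rpos`, simple roots `B`; `B1 ⊆ B` and `R1` is the subroot system with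
simple roots `B1`, with positive roots `R1 ∩ Rpos` and Weyl group `W1`. -/
theorem stmt_3
    {V : Type*} [NormedAddCommGroup V] [InnerProductSpace ℝ V]
    (R : Finset V)
    (hR0 : ∀ α ∈ R, α ≠ 0)
    (hRcrys : ∀ α ∈ R, ∀ β ∈ R, ∃ n : ℤ, 2 * ⟪β, α⟫ / ⟪α, α⟫ = (n : ℝ))
    (hRred : ∀ α ∈ R, ∀ t : ℝ, t • α ∈ R → t = 1 ∨ t = -1)
    (s : V → (V ≃ₗᵢ[ℝ] V))
    (hs : ∀ α ∈ R, ∀ x : V, s α x = x - (2 * ⟪x, α⟫ / ⟪α, α⟫) • α)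
    (hRs : ∀ α ∈ R, ∀ β ∈ R, s α β ∈ R)
    (W : Subgroup (V ≃ₗᵢ[ℝ] V))
    (hW : W = Subgroup.closure {g | ∃ α ∈ R, g = s α})
    (Rpos : Finset V) (hRposSub : Rpos ⊆ R)
    (hRsplit : ∀ α ∈ R, (α ∈ Rpos ∨ -α ∈ Rpos) ∧ ¬(α ∈ Rpos ∧ -α ∈ Rpos))
    (B : Finset V) (hBsub : B ⊆ Rpos)
    (hBindep : LinearIndependent ℝ (Subtype.val : {x : V // x ∈ B} → V))
    (hBgen : ∀ α ∈ Rpos, ∃ c : V → ℕ, α = ∑ b ∈ B, (c b : ℝ) • b)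
    (B1 : Finset V) (hB1B : B1 ⊆ B)
    (R1 : Finset V)
    (hR1 : ∀ α, α ∈ R1 ↔ α ∈ R ∧ (α : V) ∈ Submodule.span ℝ (B1 : Set V))
    (W1 : Subgroup (V ≃ₗᵢ[ℝ] V))
    (hW1 : W1 = Subgroup.closure {g | ∃ α ∈ R1, g = s α}) :
    -- T normalizes W₁
    (∀ t ∈ W, Finset.image (fun α => t α) B1 = B1 →
        ∀ u ∈ W1, t * u * t⁻¹ ∈ W1) ∧
    -- W₀ ⊆ W₁ · T
    (∀ w ∈ W, Finset.image (fun α => w α) R1 = R1 →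
        ∃ u ∈ W1, ∃ t ∈ W, Finset.image (fun α => t α) B1 = B1 ∧ w = u * t) ∧
    -- W₁ · T ⊆ W₀
    (∀ u ∈ W1, ∀ t ∈ W, Finset.image (fun α => t α) B1 = B1 →
        u * t ∈ W ∧ Finset.image (fun α => (u * t) α) R1 = R1) ∧
    -- W₁ ∩ T = {1}
    (∀ g ∈ W1, g ∈ W → Finset.image (fun α => g α) B1 = B1 → g = 1) :=
  stmt_3_general R hRred s hs hRs W hW Rpos hRposSub hRsplit B hBsub hBindep hBgen B1 hB1B R1 hR1 W1
    hW1
end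

section
/- If t ∈ T = {w ∈ W | w(B₁) = B₁}, then (ρ′, Σ_{α ∈ Q(t)} α) = 0. -/
open scoped Classical RealInnerProductSpace

/-!
Let `P = ∑ R₁⁺` and `ρ = ∑ R⁺`. A linear form equal to `1` on `B` is positive on `R⁺` and, since
`t` permutes `B₁`, is `t`-invariant on `span B₁`; hence `t` permutes `R₁⁺` and fixes `P`.
Replacing `t β` by `-t β` whenever the latter is positive turns `t` into a permutation of `R⁺`,
which gives `2 • t q = t ρ - ρ` for `q = ∑_{Q(t)} β`. As `t` is an isometry fixing `P`,
`2 ⟪P, q⟫ = 2 ⟪P, t q⟫ = ⟪t P, t ρ⟫ - ⟪P, ρ⟫ = 0`.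
-/

namespace Finset

variable {α : Type*} {S : Finset α} {f : α → α}

theorem apply_mem_iff_of_mapsTo (hf : Set.MapsTo f S S) (hinj : Function.Injective f) (x : α) :
    f x ∈ S ↔ x ∈ S := by
  refine ⟨fun hx => ?_, fun hx => hf hx⟩
  obtain ⟨y, hy, hyx⟩ := surjOn_of_injOn_of_card_le f hf hinj.injOn le_rfl hx
  rwa [← hinj hyx]

theorem sum_comp_of_mapsTo {M : Type*} [AddCommMonoid M] (hf : Set.MapsTo f S S)
    (hinj : Set.InjOn f S) (g : α → M) : ∑ x ∈ S, g (f x) = ∑ x ∈ S, g x :=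
  sum_nbij f hf hinj (surjOn_of_injOn_of_card_le f hf hinj le_rfl) fun _ _ => rfl

end Finset

theorem apply_mem_iff_of_mem_closure {𝕜 V : Type*} [Semiring 𝕜] [SeminormedAddCommGroup V]
    [Module 𝕜 V] {R : Finset V} {S : Set (V ≃ₗᵢ[𝕜] V)} (hS : ∀ g ∈ S, Set.MapsTo g R R)
    {g : V ≃ₗᵢ[𝕜] V}
    (hg : g ∈ Subgroup.closure S) (x : V) : g x ∈ R ↔ x ∈ R := by
  induction hg using Subgroup.closure_induction generalizing x with
  | mem g hg => exact Finset.apply_mem_iff_of_mapsTo (hS g hg) g.injective x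
  | one => rfl
  | mul g h _ _ ihg ihh => exact (ihg (h x)).trans (ihh x)
  | inv g _ ih => rw [← ih]; simp

theorem LinearIndepOn.exists_linearMap_eq_one {K V : Type*} [DivisionRing K] [AddCommGroup V]
    [Module K V] {B : Set V} (hB : LinearIndepOn K id B) :
    ∃ φ : V →ₗ[K] K, ∀ b ∈ B, φ b = 1 := by
  let b := Module.Basis.extend hB
  refine ⟨b.sumCoords, fun x hx => ?_⟩
  simpa [b] using b.sumCoords_self_apply (i := ⟨x, hB.subset_extend _ hx⟩)

theorem LinearMap.pos_of_eq_sum_nat_smul {K V : Type*} [Field K] [LinearOrder K]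
    [IsStrictOrderedRing K] [AddCommGroup V] [Module K V] {B : Finset V} {φ : V →ₗ[K] K}
    (hφ : ∀ b ∈ B, φ b = 1) {c : V → ℕ} {v : V} (hv : v = ∑ b ∈ B, (c b : K) • b)
    (hv0 : v ≠ 0) : 0 < φ v := by
  have hφv : φ v = ∑ b ∈ B, (c b : K) := by
    simp +contextual [hv, map_sum, hφ]
  rw [hφv]
  refine lt_of_le_of_ne (Finset.sum_nonneg fun _ _ => Nat.cast_nonneg _) fun h => hv0 ?_
  rw [hv]
  refine Finset.sum_eq_zero fun b hb => ?_
  rw [(Finset.sum_eq_zero_iff_of_nonneg fun _ _ => Nat.cast_nonneg _).1 h.symm b hb, zero_smul]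

theorem two_nsmul_sum_filter_neg_apply_mem {G F : Type*} [AddCommGroup G] [EquivLike F G G]
    [AddEquivClass F G G] {R Rpos : Finset G} (hRposSub : Rpos ⊆ R)
    (hRsplit : ∀ α ∈ R, (α ∈ Rpos ∨ -α ∈ Rpos) ∧ ¬(α ∈ Rpos ∧ -α ∈ Rpos)) (t : F)
    (htR : ∀ x ∈ R, t x ∈ R) :
    2 • ∑ β ∈ Rpos.filter (fun β => -(t β) ∈ Rpos), t β
      = ∑ β ∈ Rpos, t β - ∑ β ∈ Rpos, β := by
  set f : G → G := fun β => if -(t β) ∈ Rpos then -(t β) else t β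
  have hf : Set.MapsTo f Rpos Rpos := by
    intro β hβ
    simp only [f]
    split_ifs with h
    · exact h
    · exact (hRsplit _ (htR β (hRposSub hβ))).1.resolve_right h
  have hinj : Set.InjOn f Rpos := by
    have hneg : ∀ β₁ ∈ Rpos, ∀ β₂ ∈ Rpos, -(t β₁) ≠ t β₂ := by
      intro β₁ hβ₁ β₂ hβ₂ h
      rw [← map_neg, EquivLike.apply_eq_iff_eq] at h
      exact (hRsplit β₁ (hRposSub hβ₁)).2 ⟨hβ₁, h ▸ hβ₂⟩
    intro β₁ hβ₁ β₂ hβ₂ h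
    simp only [f] at h
    split_ifs at h
    · exact EquivLike.injective t (neg_inj.1 h)
    · exact absurd h (hneg β₁ hβ₁ β₂ hβ₂)
    · exact absurd h.symm (hneg β₂ hβ₂ β₁ hβ₁)
    · exact EquivLike.injective t h
  have hsum := Finset.sum_comp_of_mapsTo hf hinj id
  simp only [id, f, Finset.sum_ite, Finset.sum_neg_distrib] at hsum
  rw [← hsum, ← Finset.sum_filter_add_sum_filter_not Rpos (fun β => -(t β) ∈ Rpos)]
  abel

theorem mapsTo_inter_of_mapsTo_simple {K V F : Type*} [Field K] [LinearOrder K]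
    [IsStrictOrderedRing K] [AddCommGroup V] [Module K V] [FunLike F V V] [LinearMapClass F K V V]
    {R Rpos B1 R1 : Finset V} (hRpm : ∀ α ∈ R, α ∈ Rpos ∨ -α ∈ Rpos)
    (hR1 : ∀ α, α ∈ R1 ↔ α ∈ R ∧ α ∈ Submodule.span K (B1 : Set V))
    {φ : V →ₗ[K] K} (hφB1 : ∀ b ∈ B1, φ b = 1) (hφpos : ∀ β ∈ Rpos, 0 < φ β)
    (t : F) (htR : ∀ x ∈ R, t x ∈ R) (htB1 : Set.MapsTo t B1 B1) :
    Set.MapsTo t ↑(R1 ∩ Rpos) ↑(R1 ∩ Rpos) := by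
  intro β hβ
  simp only [Finset.coe_inter, Set.mem_inter_iff, Finset.mem_coe, hR1] at hβ ⊢
  obtain ⟨⟨hβR, hβspan⟩, hβpos⟩ := hβ
  have htspan : t β ∈ Submodule.span K (B1 : Set V) :=
    Submodule.span_mono htB1.image_subset
      (Submodule.apply_mem_span_image_of_mem_span (t : V →ₗ[K] V) hβspan)
  have hφt : φ (t β) = φ β :=
    LinearMap.eqOn_span (f := φ ∘ₗ (t : V →ₗ[K] V))
      (fun b hb => by simp [hφB1 b hb, hφB1 _ (htB1 hb)]) hβspan
  refine ⟨⟨htR β hβR, htspan⟩, (hRpm _ (htR β hβR)).resolve_right fun hneg => ?_⟩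
  have := hφpos _ hneg
  rw [map_neg, hφt] at this
  linarith [hφpos β hβpos]

theorem stmt_8_general
    {V : Type*} [NormedAddCommGroup V] [InnerProductSpace ℝ V]
    (R : Finset V)
    (s : V → (V ≃ₗᵢ[ℝ] V))
    (hRs : ∀ α ∈ R, ∀ β ∈ R, s α β ∈ R)
    (W : Subgroup (V ≃ₗᵢ[ℝ] V))
    (hW : W = Subgroup.closure {g | ∃ α ∈ R, g = s α})
    (Rpos : Finset V) (hRposSub : Rpos ⊆ R)
    (hRsplit : ∀ α ∈ R, (α ∈ Rpos ∨ -α ∈ Rpos) ∧ ¬(α ∈ Rpos ∧ -α ∈ Rpos))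
    (B : Finset V)
    (hBindep : LinearIndependent ℝ (Subtype.val : {x : V // x ∈ B} → V))
    (hBgen : ∀ α ∈ Rpos, ∃ c : V → ℕ, α = ∑ b ∈ B, (c b : ℝ) • b)
    (B1 : Finset V) (hB1B : B1 ⊆ B)
    (R1 : Finset V)
    (hR1 : ∀ α, α ∈ R1 ↔ α ∈ R ∧ (α : V) ∈ Submodule.span ℝ (B1 : Set V))
    (t : V ≃ₗᵢ[ℝ] V) (htW : t ∈ W)
    (ht : Finset.image (fun α => t α) B1 = B1) :
    ⟪(2⁻¹ : ℝ) • ∑ α ∈ R1 ∩ Rpos, α,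
      ∑ α ∈ Rpos.filter (fun β => -(t β) ∈ Rpos), α⟫ = 0 := by
  have htR : ∀ x ∈ R, t x ∈ R := fun x =>
    (apply_mem_iff_of_mem_closure (by rintro _ ⟨α, hα, rfl⟩ β hβ; exact hRs α hα β hβ)
      (hW ▸ htW) x).2
  have hpos_ne_zero : ∀ β ∈ Rpos, β ≠ 0 := fun β hβ h0 =>
    (hRsplit β (hRposSub hβ)).2 ⟨hβ, by rwa [h0, neg_zero, ← h0]⟩
  obtain ⟨φ, hφ⟩ := LinearIndepOn.exists_linearMap_eq_one (K := ℝ) (B := (B : Set V)) hBindep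
  have hφpos : ∀ β ∈ Rpos, 0 < φ β := fun β hβ =>
    let ⟨_, hc⟩ := hBgen β hβ
    φ.pos_of_eq_sum_nat_smul hφ hc (hpos_ne_zero β hβ)
  have hR1t := mapsTo_inter_of_mapsTo_simple (fun α hα => (hRsplit α hα).1) hR1
    (fun b hb => hφ b (hB1B hb)) hφpos t htR (fun b hb => ht ▸ Finset.mem_image_of_mem _ hb)
  set P := ∑ α ∈ R1 ∩ Rpos, α
  set q := ∑ α ∈ Rpos.filter (fun β => -(t β) ∈ Rpos), α
  have htP : t P = P := by rw [map_sum]; exact Finset.sum_comp_of_mapsTo hR1t t.injective.injOn id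
  have htq : 2 • t q = t (∑ β ∈ Rpos, β) - ∑ β ∈ Rpos, β := by
    rw [map_sum, map_sum]; exact two_nsmul_sum_filter_neg_apply_mem hRposSub hRsplit t htR
  have hPtq : ⟪P, t q⟫ + ⟪P, t q⟫ = 0 := calc
    _ = ⟪P, 2 • t q⟫ := by rw [two_nsmul, inner_add_right]
    _ = ⟪t P, t (∑ β ∈ Rpos, β)⟫ - ⟪P, ∑ β ∈ Rpos, β⟫ := by rw [htq, inner_sub_right, htP]
    _ = 0 := by rw [t.inner_map_map, sub_self]
  rw [real_inner_smul_left, ← t.inner_map_map, htP]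
  linarith

/-- Context: `R` is a finite crystallographic root system in a real inner product
space `V`, with Weyl group `W` (generated by the reflections `s α`), positive
system `Rpos`, simple roots `B`; `B1 ⊆ B` and `R1` is the subroot system with
simple roots `B1`, with positive roots `R1 ∩ Rpos` and Weyl group `W1`. -/
theorem stmt_8
    {V : Type*} [NormedAddCommGroup V] [InnerProductSpace ℝ V]
    (R : Finset V)
    (hR0 : ∀ α ∈ R, α ≠ 0)
    (hRcrys : ∀ α ∈ R, ∀ β ∈ R, ∃ n : ℤ, 2 * ⟪β, α⟫ / ⟪α, α⟫ = (n : ℝ))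
    (hRred : ∀ α ∈ R, ∀ t : ℝ, t • α ∈ R → t = 1 ∨ t = -1)
    (s : V → (V ≃ₗᵢ[ℝ] V))
    (hs : ∀ α ∈ R, ∀ x : V, s α x = x - (2 * ⟪x, α⟫ / ⟪α, α⟫) • α)
    (hRs : ∀ α ∈ R, ∀ β ∈ R, s α β ∈ R)
    (W : Subgroup (V ≃ₗᵢ[ℝ] V))
    (hW : W = Subgroup.closure {g | ∃ α ∈ R, g = s α})
    (Rpos : Finset V) (hRposSub : Rpos ⊆ R)
    (hRsplit : ∀ α ∈ R, (α ∈ Rpos ∨ -α ∈ Rpos) ∧ ¬(α ∈ Rpos ∧ -α ∈ Rpos))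
    (B : Finset V) (hBsub : B ⊆ Rpos)
    (hBindep : LinearIndependent ℝ (Subtype.val : {x : V // x ∈ B} → V))
    (hBgen : ∀ α ∈ Rpos, ∃ c : V → ℕ, α = ∑ b ∈ B, (c b : ℝ) • b)
    (B1 : Finset V) (hB1B : B1 ⊆ B)
    (R1 : Finset V)
    (hR1 : ∀ α, α ∈ R1 ↔ α ∈ R ∧ (α : V) ∈ Submodule.span ℝ (B1 : Set V))
    (t : V ≃ₗᵢ[ℝ] V) (htW : t ∈ W)
    (ht : Finset.image (fun α => t α) B1 = B1) :
    ⟪(2⁻¹ : ℝ) • ∑ α ∈ R1 ∩ Rpos, α,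
      ∑ α ∈ Rpos.filter (fun β => -(t β) ∈ Rpos), α⟫ = 0 :=
  stmt_8_general R s hRs W hW Rpos hRposSub hRsplit B hBindep hBgen B1 hB1B R1 hR1 t htW ht
end

section
/- Let Z ⊆ F^n be the Zariski closure of Λ. Then the decomposition of Z into irreducible components is Z = ⋃_{i=0}^{min(p, n−p)} X_i, where X_i = {a ∈ F^n | a_j = −p for 1 ≤ j ≤ n−p−i and a_j = −p−1 for n−p−i < j ≤ n−p+i} (the remaining coordinates being arbitrary). -/
open scoped Classical

open MvPolynomial in
theorem howe_aeval_eval {F : Type*} [CommSemiring F] {σ : Type*} (x : σ → F)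
    (f : MvPolynomial σ F) : MvPolynomial.aeval x f = MvPolynomial.eval x f := rfl

open MvPolynomial in
theorem howe_vanish_prod {F : Type*} [CommRing F] [IsDomain F] (S : Set F) (hS : S.Infinite) :
    ∀ (m : ℕ) (g : MvPolynomial (Fin m) F),
      (∀ x : Fin m → F, (∀ t, x t ∈ S) → eval x g = 0) → g = 0 := by
  intro m
  induction m with
  | zero =>
    intro g hg
    obtain ⟨r, rfl⟩ := C_surjective (Fin 0) g
    have h := hg (fun t => t.elim0) (fun t => t.elim0)
    rw [eval_C] at h
    rw [h, map_zero]
  | succ m ih =>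
    intro g hg
    have h0 : finSuccEquiv F m g = 0 := by
      apply Polynomial.ext
      intro k
      rw [Polynomial.coeff_zero]
      apply ih
      intro y hy
      have hq : (Polynomial.map (eval y) (finSuccEquiv F m g)) = 0 := by
        apply Polynomial.eq_zero_of_infinite_isRoot
        apply hS.mono
        intro s hs
        simp only [Set.mem_setOf_eq, Polynomial.IsRoot]
        rw [← eval_eq_eval_mv_eval']
        exact hg _ (fun t => Fin.cases hs hy t)
      have h2 := congrArg (fun q => Polynomial.coeff q k) hq
      simpa [Polynomial.coeff_map] using h2
    have h3 : finSuccEquiv F m g = finSuccEquiv F m 0 := by rw [h0, map_zero]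
    exact (finSuccEquiv F m).injective h3

theorem howe_tele {F : Type*} [Field F] (m : ℕ) (u : ℕ → F) (v : F) :
    ∀ t, t < m →
      (∑ s ∈ Finset.univ.filter (fun s : Fin m => s.val ≤ t),
        (if s.val = 0 then v - u 0 else u (s.val - 1) - u s.val)) = v - u t := by
  intro t
  induction t with
  | zero =>
    intro ht
    have h1 : Finset.univ.filter (fun s : Fin m => s.val ≤ 0) = {(⟨0, ht⟩ : Fin m)} := by
      ext s
      simp [Fin.ext_iff, Nat.le_zero]
    rw [h1, Finset.sum_singleton]
    simp
  | succ t iht =>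
    intro ht
    have hins : Finset.univ.filter (fun s : Fin m => s.val ≤ t + 1)
        = insert (⟨t+1, ht⟩ : Fin m) (Finset.univ.filter (fun s : Fin m => s.val ≤ t)) := by
      ext s
      simp only [Finset.mem_filter, Finset.mem_univ, true_and, Finset.mem_insert, Fin.ext_iff]
      omega
    rw [hins, Finset.sum_insert (by simp)]
    rw [iht (by omega)]
    simp only [Nat.add_sub_cancel]
    have : ¬ ((⟨t+1, ht⟩ : Fin m).val = 0) := by simp
    rw [if_neg this]
    ring

noncomputable def howePar {F : Type*} [Field F] (n p i : ℕ) (x : ℕ → F) : Fin n → F :=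
  fun j => if j.val + 1 ≤ n - p - i then -(p : F)
    else if j.val + 1 ≤ n - p + i then -(p : F) - 1
    else x (j.val - (n - p + i))

noncomputable def howeSub (F : Type*) [Field F] (n p i : ℕ) :
    Fin n → MvPolynomial (Fin (p - i)) F :=
  fun j => if j.val + 1 ≤ n - p - i then MvPolynomial.C (-(p : F))
    else if j.val + 1 ≤ n - p + i then MvPolynomial.C (-(p : F) - 1)
    else if h : j.val - (n - p + i) < p - i then MvPolynomial.X ⟨j.val - (n - p + i), h⟩ else 0

open MvPolynomial in
theorem howeSub_eval {F : Type*} [Field F] (n p i : ℕ) (f : MvPolynomial (Fin n) F)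
    (x : Fin (p - i) → F) :
    eval x (bind₁ (howeSub F n p i) f)
      = eval (howePar n p i (fun t => if h : t < p - i then x ⟨t, h⟩ else 0)) f := by
  rw [← howe_aeval_eval, aeval_bind₁]
  have : (fun j => aeval x (howeSub F n p i j))
      = howePar n p i (fun t => if h : t < p - i then x ⟨t, h⟩ else 0) := by
    funext j
    unfold howeSub howePar
    split_ifs with h1 h2 h3
    · simp
    · simp
    · simp only []; rw [dif_pos h3]; simp
    · simp only []; rw [dif_neg h3]; simp
  rw [this, howe_aeval_eval]

theorem howe_ncard_Iio (k : ℕ) : (Set.Iio k : Set ℕ).ncard = k := by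
  rw [← Finset.coe_range, Set.ncard_coe_finset, Finset.card_range]

theorem howe_dc (s : Set ℕ) (hf : s.Finite) (hdc : ∀ a b : ℕ, a ≤ b → b ∈ s → a ∈ s) :
    s = Set.Iio s.ncard := by
  rcases s.eq_empty_or_nonempty with h | h
  · rw [h, Set.ncard_empty]
    ext x; simp
  · have hne : hf.toFinset.Nonempty := by simpa using h
    set M := hf.toFinset.max' hne with hM
    have hMs : M ∈ s := by
      have := hf.toFinset.max'_mem hne
      simpa using this
    have hs : s = Set.Iic M := by
      apply Set.Subset.antisymm
      · intro x hx
        exact Finset.le_max' _ x (by simpa using hx)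
      · intro x hx
        exact hdc x M hx hMs
    have hIic : (Set.Iic M : Set ℕ) = Set.Iio (M + 1) := by
      ext x; simp [Nat.lt_succ_iff]
    rw [hs, hIic, howe_ncard_Iio]

theorem howePar_congr {F : Type*} [Field F] {n p i : ℕ} (hip : i ≤ p) (hinp : i ≤ n - p)
    (hpn : p < n) {x y : ℕ → F} (h : ∀ t, t < p - i → x t = y t) :
    howePar n p i x = howePar n p i y := by
  funext j
  have hj := j.isLt
  unfold howePar
  split_ifs with h1 h2
  · rfl
  · rfl
  · exact h _ (by omega)

def howeMu (p i : ℕ) (c : ℕ → ℕ) : ℕ → ℕ :=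
  fun r => if r < p - i then c (p - i - 1 - r) else if r < p + i then 1 else 0

theorem howeMu_anti (p i : ℕ) (c : ℕ → ℕ) (hcm : Monotone c) (hc0 : 1 ≤ c 0) :
    Antitone (howeMu p i c) := by
  intro r r' hle
  unfold howeMu
  split_ifs <;>
    first
      | exact hcm (by omega)
      | exact le_trans hc0 (hcm (Nat.zero_le _))
      | omega

theorem howeMu_pos_set (p i : ℕ) (c : ℕ → ℕ) (hcm : Monotone c) (hc0 : 1 ≤ c 0) :
    {r | 0 < howeMu p i c r} = Set.Iio (p + i) := by
  ext r
  simp only [Set.mem_setOf_eq, Set.mem_Iio, howeMu]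
  split_ifs with h1 h2
  · exact iff_of_true (lt_of_lt_of_le hc0 (hcm (Nat.zero_le _))) (by omega)
  · exact iff_of_true one_pos h2
  · exact iff_of_false (lt_irrefl 0) (by omega)

theorem howeMu_two_subset (p i : ℕ) (c : ℕ → ℕ) :
    {r | 2 ≤ howeMu p i c r} ⊆ Set.Iio (p - i) := by
  intro r hr
  simp only [Set.mem_setOf_eq, howeMu] at hr
  simp only [Set.mem_Iio]
  by_contra hcon
  push_neg at hcon
  rw [if_neg (by omega)] at hr
  split_ifs at hr <;> omega

open MvPolynomial

/-- Case B of Howe duality for the pair `(O_k, sp_{2n})` with `k = 2p < 2n`: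
the Zariski closure `Z` of the set `Λ ⊆ F^n` of highest weights (in standard
coordinates) of the irreducible `sp_{2n}`-constituents of the polynomials on
`M_{k,n}` decomposes into irreducible components as `Z = ⋃_{i=0}^{min(p,n-p)} X_i`,
where `X_i = {a | a_j = -p for 1 ≤ j ≤ n-p-i, a_j = -p-1 for n-p-i < j ≤ n-p+i}`.
A partition `μ` is encoded as an antitone finitely supported function `ℕ → ℕ`
(parts `μ₁ = μ 0 ≥ μ₂ = μ 1 ≥ ⋯`), with `μ′₁ = #{i | μ i > 0}` and
`μ′₂ = #{i | μ i ≥ 2}`; the associated point `a(μ) ∈ F^n` has coordinates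
`a_j = -p - μ_{n+1-j}` (1-indexed), i.e. `a j = -p - μ (n - 1 - j)` (0-indexed).
The ambient affine space `Fin n → F` carries the Zariski topology. -/
theorem stmt_19
    {F : Type*} [Field F] [IsAlgClosed F] [CharZero F]
    (n p : ℕ) (hp : 0 < p) (hn : 0 < n) (hk : 2 * p < 2 * n)
    [TopologicalSpace (Fin n → F)]
    (hτ : ∀ s : Set (Fin n → F), IsClosed s ↔
      ∃ I : Set (MvPolynomial (Fin n) F),
        s = {x | ∀ f ∈ I, MvPolynomial.eval x f = 0})
    (Λ : Set (Fin n → F))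
    (hΛ : Λ = {a : Fin n → F | ∃ μ : ℕ → ℕ, Antitone μ ∧ {i | 0 < μ i}.Finite ∧
      {i | 0 < μ i}.ncard + {i | 2 ≤ μ i}.ncard ≤ 2 * p ∧
      {i | 0 < μ i}.ncard ≤ n ∧
      ∀ j : Fin n, a j = -(p : F) - (μ (n - 1 - j.val) : F)})
    (Xi : ℕ → Set (Fin n → F))
    (hXi : ∀ i, Xi i = {a : Fin n → F | ∀ j : Fin n,
      (j.val + 1 ≤ n - p - i → a j = -(p : F)) ∧
      (n - p - i < j.val + 1 → j.val + 1 ≤ n - p + i → a j = -(p : F) - 1)}) :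
    closure Λ = (⋃ i ∈ Set.Iic (min p (n - p)), Xi i) ∧
    (∀ i ≤ min p (n - p), IsClosed (Xi i) ∧ IsIrreducible (Xi i) ∧
      Xi i ⊆ closure Λ ∧
      ∀ C, C ⊆ closure Λ → IsIrreducible C → Xi i ⊆ C → C = Xi i) ∧
    (∀ i ≤ min p (n - p), ∀ j ≤ min p (n - p), Xi i = Xi j → i = j) := by
  have hpn : p < n := by omega
  set M := min p (n - p) with hMdef
  -- Each Xi is closed
  have hXiclosed : ∀ i, IsClosed (Xi i) := by
    intro i
    rw [hτ]
    refine ⟨((fun j : Fin n => X j - C (-(p:F))) '' {j | j.val + 1 ≤ n - p - i})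
      ∪ ((fun j : Fin n => X j - C (-(p:F) - 1)) ''
          {j | n - p - i < j.val + 1 ∧ j.val + 1 ≤ n - p + i}), ?_⟩
    rw [hXi]
    ext a
    simp only [Set.mem_setOf_eq, Set.mem_union, Set.mem_image]
    constructor
    · intro ha f hf
      rcases hf with ⟨j, hj, rfl⟩ | ⟨j, hj, rfl⟩
      · simp [(ha j).1 hj]
      · simp [(ha j).2 hj.1 hj.2]
    · intro ha j
      constructor
      · intro hj
        have h := ha _ (Or.inl ⟨j, hj, rfl⟩)
        simpa only [map_sub, eval_X, eval_C, sub_eq_zero] using h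
      · intro h1 h2
        have h := ha _ (Or.inr ⟨j, ⟨h1, h2⟩, rfl⟩)
        simpa only [map_sub, eval_X, eval_C, sub_eq_zero] using h
  -- the parametrization lands in Xi
  have hParXi : ∀ (i : ℕ) (x : ℕ → F), howePar n p i x ∈ Xi i := by
    intro i x
    simp only [hXi, Set.mem_setOf_eq]
    intro j
    constructor
    · intro hj; unfold howePar; rw [if_pos hj]
    · intro h1 h2; unfold howePar; rw [if_neg (by omega), if_pos h2]
  -- every element of Xi is in the range of the parametrization
  have hXiPar : ∀ i ≤ M, ∀ a ∈ Xi i,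
      a = howePar n p i (fun t => if h : n - p + i + t < n then a ⟨n - p + i + t, h⟩ else 0) := by
    intro i hi a ha
    simp only [hXi, Set.mem_setOf_eq] at ha
    have hip : i ≤ p := le_trans hi (min_le_left _ _)
    have hinp : i ≤ n - p := le_trans hi (min_le_right _ _)
    funext j
    have hj := j.isLt
    unfold howePar
    split_ifs with h1 h2
    · exact (ha j).1 h1
    · exact (ha j).2 (by omega) h2
    · have hlt : n - p + i + (j.val - (n - p + i)) < n := by omega
      simp only [dif_pos hlt]
      congr 1
      apply Fin.ext
      show j.val = n - p + i + (j.val - (n - p + i))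
      omega
  -- parametrized points with integer antitone data lie in Λ
  have hParΛ : ∀ i ≤ M, ∀ c : ℕ → ℕ, Monotone c → 1 ≤ c 0 →
      howePar n p i (fun t => -(p:F) - (c t : F)) ∈ Λ := by
    intro i hi c hcm hc0
    have hip : i ≤ p := le_trans hi (min_le_left _ _)
    have hinp : i ≤ n - p := le_trans hi (min_le_right _ _)
    rw [hΛ]
    have n1 : {r | 0 < howeMu p i c r}.ncard = p + i := by
      rw [howeMu_pos_set p i c hcm hc0, howe_ncard_Iio]
    have n2 : {r | 2 ≤ howeMu p i c r}.ncard ≤ p - i := by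
      have h := Set.ncard_le_ncard (howeMu_two_subset p i c) (Set.finite_Iio _)
      rwa [howe_ncard_Iio] at h
    refine ⟨howeMu p i c, howeMu_anti p i c hcm hc0, ?_, ?_, ?_, ?_⟩
    · rw [howeMu_pos_set p i c hcm hc0]
      exact Set.finite_Iio _
    · rw [n1]; omega
    · rw [n1]; omega
    · intro j
      have hj := j.isLt
      unfold howePar
      split_ifs with h1 h2
      · have hval : howeMu p i c (n - 1 - j.val) = 0 := by
          unfold howeMu
          have hc1 : ¬ (n - 1 - j.val < p - i) := by omega
          have hc2 : ¬ (n - 1 - j.val < p + i) := by omega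
          rw [if_neg hc1, if_neg hc2]
        rw [hval]
        simp
      · have hval : howeMu p i c (n - 1 - j.val) = 1 := by
          unfold howeMu
          have hc1 : ¬ (n - 1 - j.val < p - i) := by omega
          have hc2 : n - 1 - j.val < p + i := by omega
          rw [if_neg hc1, if_pos hc2]
        rw [hval]
        push_cast
        ring
      · have hval : howeMu p i c (n - 1 - j.val) = c (j.val - (n - p + i)) := by
          unfold howeMu
          have hc1 : n - 1 - j.val < p - i := by omega
          rw [if_pos hc1]
          congr 1
          omega
        rw [hval]
  -- Λ is contained in the union
  have hΛsub : Λ ⊆ ⋃ i ∈ Set.Iic M, Xi i := by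
    intro a ha
    rw [hΛ] at ha
    obtain ⟨μ, hmono, hfin, hsum, hlen, hcoord⟩ := ha
    set ℓ := {r | 0 < μ r}.ncard with hldef
    set m₂ := {r | 2 ≤ μ r}.ncard with hm2def
    have hdc1 : {r | 0 < μ r} = Set.Iio ℓ :=
      howe_dc _ hfin (fun x y hxy hy => lt_of_lt_of_le hy (hmono hxy))
    have hfin2 : {r | 2 ≤ μ r}.Finite :=
      hfin.subset (fun r hr => by simp only [Set.mem_setOf_eq] at hr ⊢; omega)
    have hdc2 : {r | 2 ≤ μ r} = Set.Iio m₂ :=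
      howe_dc _ hfin2 (fun x y hxy hy => le_trans hy (hmono hxy))
    have hμpos : ∀ r, 0 < μ r ↔ r < ℓ := fun r => by
      have := Set.ext_iff.mp hdc1 r
      simpa using this
    have hμ2 : ∀ r, 2 ≤ μ r ↔ r < m₂ := fun r => by
      have := Set.ext_iff.mp hdc2 r
      simpa using this
    by_cases hcase : ℓ ≤ p
    · refine Set.mem_biUnion (show (0:ℕ) ∈ Set.Iic M by simp) ?_
      simp only [hXi, Set.mem_setOf_eq]
      intro j
      have hj := j.isLt
      constructor
      · intro hjle
        have hval : μ (n - 1 - j.val) = 0 := by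
          by_contra hne
          have := (hμpos _).mp (Nat.pos_of_ne_zero hne)
          omega
        rw [hcoord j, hval]
        simp
      · intro h1 h2
        omega
    · push_neg at hcase
      have hl1 : 1 ≤ ℓ := by omega
      refine Set.mem_biUnion (show ℓ - p ∈ Set.Iic M by
        simp only [Set.mem_Iic, hMdef, le_min_iff]; omega) ?_
      simp only [hXi, Set.mem_setOf_eq]
      intro j
      have hj := j.isLt
      constructor
      · intro hjle
        have hval : μ (n - 1 - j.val) = 0 := by
          by_contra hne
          have := (hμpos _).mp (Nat.pos_of_ne_zero hne)
          omega
        rw [hcoord j, hval]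
        simp
      · intro h1 h2
        have hr1 : n - 1 - j.val < ℓ := by omega
        have hr2 : m₂ ≤ n - 1 - j.val := by omega
        have hval : μ (n - 1 - j.val) = 1 := by
          have hp1 := (hμpos (n - 1 - j.val)).mpr hr1
          have hp2 : ¬ (2 ≤ μ (n - 1 - j.val)) := fun hc => by
            have := (hμ2 _).mp hc; omega
          omega
        rw [hcoord j, hval]
        push_cast
        ring
  -- the union is closed
  have hUc : IsClosed (⋃ i ∈ Set.Iic M, Xi i) :=
    (Set.finite_Iic M).isClosed_biUnion (fun i _ => hXiclosed i)
  -- evaluation of substituted polynomials recovers evaluation on Xi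
  have keyEval : ∀ i ≤ M, ∀ (f : MvPolynomial (Fin n) F) (a : Fin n → F), a ∈ Xi i →
      ∃ x : Fin (p - i) → F,
        eval x (bind₁ (howeSub F n p i) f) = eval a f := by
    intro i hi f a ha
    have hip : i ≤ p := le_trans hi (min_le_left _ _)
    have hinp : i ≤ n - p := le_trans hi (min_le_right _ _)
    set u : ℕ → F := fun t => if h : n - p + i + t < n then a ⟨n - p + i + t, h⟩ else 0 with hu
    refine ⟨fun t => u t.val, ?_⟩
    rw [howeSub_eval]
    have hcg : howePar n p i
        (fun t => if h : t < p - i then (fun s : Fin (p - i) => u s.val) ⟨t, h⟩ else 0)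
        = howePar n p i u := by
      apply howePar_congr hip hinp hpn
      intro t ht
      simp only [dif_pos ht]
    rw [hcg, ← hXiPar i hi a ha]
  -- density: each Xi lies in the closure of Λ
  have hdense : ∀ i ≤ M, Xi i ⊆ closure Λ := by
    intro i hi a ha
    have hip : i ≤ p := le_trans hi (min_le_left _ _)
    have hinp : i ≤ n - p := le_trans hi (min_le_right _ _)
    obtain ⟨I, hI⟩ := (hτ (closure Λ)).mp isClosed_closure
    rw [hI]
    intro f hf
    have hfΛ : ∀ b ∈ Λ, eval b f = 0 := by
      intro b hb
      have hb' : b ∈ closure Λ := subset_closure hb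
      rw [hI] at hb'
      exact hb' f hf
    set m := p - i with hm
    set g : MvPolynomial (Fin m) F := bind₁ (howeSub F n p i) f with hg
    set σp : Fin m → MvPolynomial (Fin m) F := fun t =>
      C (-(p:F) - 1) - ∑ s ∈ Finset.univ.filter (fun s : Fin m => s.val ≤ t.val), X s with hσ
    set G : MvPolynomial (Fin m) F := bind₁ σp g with hG
    -- G vanishes on the ℕ-grid
    have hGzero : G = 0 := by
      have hS : (Set.range (Nat.cast : ℕ → F)).Infinite :=
        Set.infinite_range_of_injective Nat.cast_injective
      apply howe_vanish_prod _ hS m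
      intro x hx
      choose d hd using hx
      have hxd : x = fun t => (d t : F) := by funext t; exact (hd t).symm
      -- define the associated monotone integer sequence
      set c : ℕ → ℕ := fun t =>
        1 + ∑ s ∈ Finset.univ.filter (fun s : Fin m => s.val ≤ t), d s with hc
      have hcm : Monotone c := by
        intro t t' htt
        simp only [hc]
        have hsub : (Finset.univ.filter (fun s : Fin m => s.val ≤ t))
            ⊆ (Finset.univ.filter (fun s : Fin m => s.val ≤ t')) := by
          intro s hs
          simp only [Finset.mem_filter] at hs ⊢
          exact ⟨hs.1, le_trans hs.2 htt⟩
        exact Nat.add_le_add_left (Finset.sum_le_sum_of_subset hsub) 1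
      have hc0 : 1 ≤ c 0 := Nat.le_add_right 1 _
      -- evaluate G at the grid point
      have e1 : eval x G = eval (fun t => eval x (σp t)) g := by
        rw [hG, ← howe_aeval_eval, aeval_bind₁]
        rfl
      have e2 : (fun t : Fin m => eval x (σp t))
          = fun t : Fin m => (-(p:F) - 1) -
              ∑ s ∈ Finset.univ.filter (fun s : Fin m => s.val ≤ t.val), x s := by
        funext t
        simp only [hσ, map_sub, eval_C, map_sum, eval_X]
      have e3 : eval (fun t : Fin m => (-(p:F) - 1) -
            ∑ s ∈ Finset.univ.filter (fun s : Fin m => s.val ≤ t.val), x s) g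
          = eval (howePar n p i (fun t => if h : t < m then
              ((-(p:F) - 1) - ∑ s ∈ Finset.univ.filter (fun s : Fin m => s.val ≤ t), x s)
              else 0)) f := by
        rw [hg, howeSub_eval]
      have e4 : howePar n p i (fun t => if h : t < m then
            ((-(p:F) - 1) - ∑ s ∈ Finset.univ.filter (fun s : Fin m => s.val ≤ t), x s)
            else 0)
          = howePar n p i (fun t => -(p:F) - (c t : F)) := by
        apply howePar_congr hip hinp hpn
        intro t ht
        rw [dif_pos ht]
        simp only [hc, hxd]
        push_cast
        ring
      rw [e1, e2, e3, e4]
      exact hfΛ _ (hParΛ i hi c hcm hc0)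
    -- from G = 0 deduce g = 0 via surjectivity of the substitution
    have hsurj : ∀ y : Fin m → F, ∃ z : Fin m → F,
        (fun t : Fin m => eval z (σp t)) = y := by
      intro y
      set u : ℕ → F := fun t => if h : t < m then y ⟨t, h⟩ else 0 with hu
      refine ⟨fun t => if t.val = 0 then (-(p:F) - 1) - u 0 else u (t.val - 1) - u t.val, ?_⟩
      funext t
      simp only [hσ, map_sub, eval_C, map_sum, eval_X]
      rw [howe_tele m u (-(p:F) - 1) t.val t.isLt]
      have : u t.val = y t := by
        simp only [hu, dif_pos t.isLt]
      rw [← this]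
      ring
    have hgzero : g = 0 := by
      apply MvPolynomial.funext
      intro y
      obtain ⟨z, hz⟩ := hsurj y
      have h1 : eval z G = 0 := by rw [hGzero, map_zero]
      rw [hG, ← howe_aeval_eval, aeval_bind₁] at h1
      have h2 : aeval (fun t => aeval z (σp t)) g = eval (fun t : Fin m => eval z (σp t)) g := rfl
      rw [h2, hz] at h1
      rw [h1, map_zero]
    obtain ⟨x₀, hx₀⟩ := keyEval i hi f a ha
    rw [← hx₀, ← hg, hgzero, map_zero]
  -- the closure equality
  have hclosure : closure Λ = ⋃ i ∈ Set.Iic M, Xi i := by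
    apply Set.Subset.antisymm
    · exact closure_minimal hΛsub hUc
    · intro x hx
      simp only [Set.mem_iUnion] at hx
      obtain ⟨i, hi, hxi⟩ := hx
      exact hdense i hi hxi
  -- disjointness of distinct components
  have hdisj : ∀ i ≤ M, ∀ j ≤ M, i ≠ j → ∀ a, a ∈ Xi i → a ∈ Xi j → False := by
    intro i hi j hj hne a hai haj
    simp only [hXi, Set.mem_setOf_eq] at hai haj
    have hi1 : i ≤ p := le_trans hi (min_le_left _ _)
    have hi2 : i ≤ n - p := le_trans hi (min_le_right _ _)
    have hj1 : j ≤ p := le_trans hj (min_le_left _ _)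
    have hj2 : j ≤ n - p := le_trans hj (min_le_right _ _)
    rcases Nat.lt_or_ge i j with hlt | hge
    · have hq : n - p - i - 1 < n := by omega
      have e1 : a ⟨n - p - i - 1, hq⟩ = -(p:F) :=
        (hai ⟨n - p - i - 1, hq⟩).1 (show n - p - i - 1 + 1 ≤ n - p - i by omega)
      have e2 : a ⟨n - p - i - 1, hq⟩ = -(p:F) - 1 :=
        (haj ⟨n - p - i - 1, hq⟩).2 (show n - p - j < n - p - i - 1 + 1 by omega)
          (show n - p - i - 1 + 1 ≤ n - p + j by omega)
      have h10 : (1:F) = 0 := sub_eq_self.mp ((e1.symm.trans e2).symm)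
      exact one_ne_zero h10
    · have hlt' : j < i := by omega
      have hq : n - p - j - 1 < n := by omega
      have e1 : a ⟨n - p - j - 1, hq⟩ = -(p:F) :=
        (haj ⟨n - p - j - 1, hq⟩).1 (show n - p - j - 1 + 1 ≤ n - p - j by omega)
      have e2 : a ⟨n - p - j - 1, hq⟩ = -(p:F) - 1 :=
        (hai ⟨n - p - j - 1, hq⟩).2 (show n - p - i < n - p - j - 1 + 1 by omega)
          (show n - p - j - 1 + 1 ≤ n - p + i by omega)
      have h10 : (1:F) = 0 := sub_eq_self.mp ((e1.symm.trans e2).symm)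
      exact one_ne_zero h10
  -- irreducibility of each Xi
  have hirr : ∀ i ≤ M, IsIrreducible (Xi i) := by
    intro i hi
    have hip : i ≤ p := le_trans hi (min_le_left _ _)
    have hinp : i ≤ n - p := le_trans hi (min_le_right _ _)
    constructor
    · exact ⟨howePar n p i (fun _ => 0), hParXi i _⟩
    · rw [isPreirreducible_iff_isClosed_union_isClosed]
      intro z₁ z₂ hz₁ hz₂ hsub
      by_contra hcon
      push_neg at hcon
      obtain ⟨hn1, hn2⟩ := hcon
      obtain ⟨a₁, ha₁, ha₁'⟩ := Set.not_subset.mp hn1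
      obtain ⟨a₂, ha₂, ha₂'⟩ := Set.not_subset.mp hn2
      obtain ⟨I₁, hI₁⟩ := (hτ z₁).mp hz₁
      obtain ⟨I₂, hI₂⟩ := (hτ z₂).mp hz₂
      have hf₁ : ∃ f₁ ∈ I₁, eval a₁ f₁ ≠ 0 := by
        by_contra hcc
        push_neg at hcc
        exact ha₁' (by rw [hI₁]; intro f hf; exact hcc f hf)
      have hf₂ : ∃ f₂ ∈ I₂, eval a₂ f₂ ≠ 0 := by
        by_contra hcc
        push_neg at hcc
        exact ha₂' (by rw [hI₂]; intro f hf; exact hcc f hf)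
      obtain ⟨f₁, hf₁I, hf₁ne⟩ := hf₁
      obtain ⟨f₂, hf₂I, hf₂ne⟩ := hf₂
      set g₁ : MvPolynomial (Fin (p - i)) F := bind₁ (howeSub F n p i) f₁ with hg₁
      set g₂ : MvPolynomial (Fin (p - i)) F := bind₁ (howeSub F n p i) f₂ with hg₂
      have hg₁ne : g₁ ≠ 0 := by
        intro h0
        obtain ⟨x₁, hx₁⟩ := keyEval i hi f₁ a₁ ha₁
        rw [← hg₁, h0, map_zero] at hx₁
        exact hf₁ne hx₁.symm
      have hg₂ne : g₂ ≠ 0 := by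
        intro h0
        obtain ⟨x₂, hx₂⟩ := keyEval i hi f₂ a₂ ha₂
        rw [← hg₂, h0, map_zero] at hx₂
        exact hf₂ne hx₂.symm
      have hmul : g₁ * g₂ ≠ 0 := mul_ne_zero hg₁ne hg₂ne
      have hex : ∃ x : Fin (p - i) → F, eval x (g₁ * g₂) ≠ 0 := by
        by_contra hcc
        push_neg at hcc
        exact hmul (MvPolynomial.funext (fun x => by rw [hcc x, map_zero]))
      obtain ⟨x, hx⟩ := hex
      rw [map_mul] at hx
      have hpt : howePar n p i (fun t => if h : t < p - i then x ⟨t, h⟩ else 0) ∈ Xi i :=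
        hParXi i _
      rcases hsub hpt with hz | hz
      · rw [hI₁] at hz
        have := hz f₁ hf₁I
        rw [← howeSub_eval] at this
        exact (left_ne_zero_of_mul hx) this
      · rw [hI₂] at hz
        have := hz f₂ hf₂I
        rw [← howeSub_eval] at this
        exact (right_ne_zero_of_mul hx) this
  -- maximality
  have hmax : ∀ i ≤ M, ∀ C, C ⊆ closure Λ → IsIrreducible C → Xi i ⊆ C → C = Xi i := by
    intro i hi C hC hCirr hXC
    have hCsub : C ⊆ ⋃₀ ↑((Finset.Iic M).image Xi) := by
      intro x hx
      have hx' := hC hx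
      rw [hclosure] at hx'
      simp only [Set.mem_iUnion] at hx'
      obtain ⟨j, hj, hxj⟩ := hx'
      refine ⟨Xi j, ?_, hxj⟩
      simp only [Finset.coe_image, Set.mem_image, Finset.mem_coe, Finset.mem_Iic]
      exact ⟨j, hj, rfl⟩
    obtain ⟨z, hzmem, hCz⟩ := (isIrreducible_iff_sUnion_isClosed.mp hCirr)
      ((Finset.Iic M).image Xi)
      (by
        intro z hz
        simp only [Finset.mem_image, Finset.mem_Iic] at hz
        obtain ⟨j, _, rfl⟩ := hz
        exact hXiclosed j)
      hCsub
    simp only [Finset.mem_image, Finset.mem_Iic] at hzmem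
    obtain ⟨j, hjM, rfl⟩ := hzmem
    have hij : i = j := by
      by_contra hne
      have hpt : howePar n p i (fun _ => 0) ∈ Xi i := hParXi i _
      exact hdisj i hi j hjM hne _ hpt (hCz (hXC hpt))
    rw [← hij] at hCz
    exact Set.Subset.antisymm hCz hXC
  refine ⟨hclosure, fun i hi => ⟨hXiclosed i, hirr i hi, hdense i hi, hmax i hi⟩, ?_⟩
  intro i hi j hj hEq
  by_contra hne
  have hpt : howePar n p i (fun _ => 0) ∈ Xi i := hParXi i _
  exact hdisj i hi j hj hne _ hpt (hEq ▸ hpt)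
end
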